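/- arXiv:1112.0620 — 9 statements merged into one kernel-verified Lean document; each statement's English description precedes it below -/
import Mathlib

section
/- Let X = diag(x_1, …, x_N) be a diagonal N×N complex matrix. Then Σ_{σ ∈ S_m} sgn(σ) · tr(P_σ · X_1 X_2 ⋯ X_m) = m! · e_m(x_1, …, x_N), where the trace is over (ℂ^N)^{⊗m}; i.e. the trace of the antisymmetrizer (1/m!) Σ_{σ} sgn(σ) P_σ composed with X_1⋯X_m equals the elementary symmetric polynomial e_m(x_1,…,x_N). -/
/-!
Since `P_σ` sends the basis vector `e_J` to `e_{J ∘ σ⁻¹}`, the alternating sum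
`Σ_σ sgn σ · tr (P_σ X^{⊗m})` is `Σ_I det (X_{I(a), I(b)})_{a,b}` over all multi-indices
`I : Fin m → Fin N`. For diagonal `X` such a minor vanishes unless `I` is injective, when it is
`∏ₐ x_{I(a)}`; every `m`-subset of `Fin N` is the image of exactly `m!` injective `I`.
-/

open Finset

noncomputable section

/-- The operator on `(ℂ^N)^{⊗m}` permuting the tensor factors according to `σ`. -/
def Pperm {N m : ℕ} (σ : Equiv.Perm (Fin m)) :
    Matrix (Fin m → Fin N) (Fin m → Fin N) ℂ :=
  Matrix.of fun I J => if I = fun a => J (σ⁻¹ a) then 1 else 0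

/-- The operator `(X 0)_1 (X 1)_2 ⋯ (X (m-1))_m` on `(ℂ^N)^{⊗m}`. -/
def embAll {N m : ℕ} (X : Fin m → Matrix (Fin N) (Fin N) ℂ) :
    Matrix (Fin m → Fin N) (Fin m → Fin N) ℂ :=
  Matrix.of fun I J => ∏ a, X a (I a) (J a)

open Matrix Equiv

section Counting

variable {α : Type*} [DecidableEq α] {m : ℕ}

lemma injective_of_image_univ_eq {s : Finset α} (hs : #s = m) {I : Fin m → α}
    (hI : univ.image I = s) : Function.Injective I := by
  rw [← Set.injOn_univ, ← coe_univ, ← card_image_iff, hI, hs, card_univ, Fintype.card_fin]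

variable [Fintype α]

lemma card_filter_image_univ_eq {s : Finset α} (hs : #s = m) :
    #{I : Fin m → α | univ.image I = s} = m.factorial := by
  let enum : Fin m ≃ s := (finCongr hs.symm).trans s.equivFin.symm
  let e : Fin m ↪ α := enum.toEmbedding.trans (Function.Embedding.subtype _)
  have he : univ.image e = s := by
    ext i
    refine ⟨fun hi => ?_, fun hi => mem_image.mpr ⟨enum.symm ⟨i, hi⟩, mem_univ _, by simp [e]⟩⟩
    obtain ⟨a, -, rfl⟩ := mem_image.mp hi
    exact (enum a).2
  calc #{I : Fin m → α | univ.image I = s} = #(univ : Finset (Perm (Fin m))) := by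
        symm
        refine card_bij (fun σ _ => e ∘ σ) ?_ ?_ ?_
        · intro σ _
          simp [← he, ← Finset.image_image, Finset.image_univ_equiv]
        · intro σ _ τ _ h
          exact Perm.ext (congrFun (e.injective.comp_left h))
        · intro I hI
          simp only [mem_filter, mem_univ, true_and] at hI
          have hI_inj := injective_of_image_univ_eq hs hI
          obtain ⟨g, rfl⟩ : ∃ g, I = e ∘ g := by
            rw [← Set.range_subset_range_iff_exists_comp]
            rintro _ ⟨a, rfl⟩
            obtain ⟨b, -, hb⟩ := mem_image.mp (he ▸ hI ▸ mem_image_of_mem I (mem_univ a))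
            exact ⟨b, hb⟩
          exact ⟨.ofBijective g (Finite.injective_iff_bijective.mp hI_inj.of_comp), mem_univ _, rfl⟩
    _ = m.factorial := by simp [Fintype.card_perm]

lemma sum_injective_prod_eq_factorial_mul_sum_powersetCard {R : Type*} [CommSemiring R]
    (f : α → R) :
    ∑ I : Fin m → α with Function.Injective I, ∏ a, f (I a) =
      m.factorial * ∑ s ∈ powersetCard m univ, ∏ i ∈ s, f i := by
  have h_maps : ∀ I ∈ ({I | Function.Injective I} : Finset (Fin m → α)),
      univ.image I ∈ powersetCard m univ := by
    intro I hI
    simp_all [card_image_of_injective]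
  rw [← sum_fiberwise_of_maps_to h_maps, mul_sum]
  refine sum_congr rfl fun s hs => ?_
  have hs : #s = m := mem_powersetCard_univ.mp hs
  have h_fiber : ({I | Function.Injective I} : Finset (Fin m → α)).filter (univ.image · = s) =
      ({I | univ.image I = s} : Finset (Fin m → α)) := by
    ext I
    simpa using injective_of_image_univ_eq hs
  have h_prod : ∀ I ∈ ({I | Function.Injective I} : Finset (Fin m → α)).filter
      (univ.image · = s), ∏ a, f (I a) = ∏ i ∈ s, f i := by
    intro I hI
    simp only [mem_filter, mem_univ, true_and] at hI
    rw [← hI.2, prod_image hI.1.injOn]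
  rw [sum_congr rfl h_prod, sum_const, h_fiber, card_filter_image_univ_eq hs, nsmul_eq_mul]

end Counting

lemma Matrix.det_submatrix_diagonal {ι α R : Type*} [Fintype ι] [DecidableEq ι] [DecidableEq α]
    [CommRing R] (d : α → R) (I : ι → α) :
    ((diagonal d).submatrix I I).det = if Function.Injective I then ∏ i, d (I i) else 0 := by
  split_ifs with hI
  · rw [submatrix_diagonal _ _ hI, det_diagonal]
    rfl
  · obtain ⟨a, b, hab, hne⟩ := by simpa [Function.Injective] using hI
    exact det_zero_of_row_eq hne (by ext; simp [hab])

section TensorPower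

variable {N m : ℕ}

lemma Pperm_apply (σ : Perm (Fin m)) (I J : Fin m → Fin N) :
    Pperm σ I J = if J = I ∘ σ then 1 else 0 := by
  have h : (I = fun a => J (σ⁻¹ a)) ↔ J = I ∘ σ := by
    rw [Perm.coe_inv, ← Function.comp_def, Equiv.eq_comp_symm, eq_comm]
  simp only [Pperm, of_apply, h]

lemma Pperm_mul_apply (σ : Perm (Fin m)) (M : Matrix (Fin m → Fin N) (Fin m → Fin N) ℂ)
    (I J : Fin m → Fin N) :
    (Pperm σ * M : Matrix (Fin m → Fin N) (Fin m → Fin N) ℂ) I J = M (I ∘ σ) J := by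
  simp [mul_apply, Pperm_apply]

lemma trace_Pperm_mul (σ : Perm (Fin m)) (M : Matrix (Fin m → Fin N) (Fin m → Fin N) ℂ) :
    trace (Pperm σ * M) = ∑ I, M (I ∘ σ) I := by
  simp [trace, Pperm_mul_apply]

lemma sum_sign_mul_trace_Pperm_mul_embAll (X : Matrix (Fin N) (Fin N) ℂ) :
    ∑ σ : Perm (Fin m), ((Perm.sign σ : ℤ) : ℂ) * trace (Pperm σ * embAll fun _ => X) =
      ∑ I : Fin m → Fin N, (X.submatrix I I).det := by
  simp_rw [trace_Pperm_mul, mul_sum, det_apply']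
  rw [sum_comm]
  rfl

end TensorPower

theorem trace_antisymmetrizer_eq_esymm_general {N m : ℕ} (x : Fin N → ℂ) :
    ∑ σ : Equiv.Perm (Fin m), ((Equiv.Perm.sign σ : ℤ) : ℂ) *
        Matrix.trace (Pperm σ * embAll (fun _ => Matrix.diagonal x)) =
      (m.factorial : ℂ) *
        ∑ s ∈ Finset.powersetCard m (Finset.univ : Finset (Fin N)), ∏ i ∈ s, x i := by
  simp_rw [sum_sign_mul_trace_Pperm_mul_embAll, det_submatrix_diagonal, ← sum_filter]
  exact sum_injective_prod_eq_factorial_mul_sum_powersetCard x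

/-- For a diagonal matrix `X = diag(x_1, …, x_N)`,
`Σ_σ sgn(σ) tr (P_σ X_1 ⋯ X_m) = m! · e_m(x_1, …, x_N)`. -/
theorem trace_antisymmetrizer_eq_esymm {N m : ℕ} (hN : 1 ≤ N) (hm : 1 ≤ m)
    (x : Fin N → ℂ) :
    ∑ σ : Equiv.Perm (Fin m), ((Equiv.Perm.sign σ : ℤ) : ℂ) *
        Matrix.trace (Pperm σ * embAll (fun _ => Matrix.diagonal x)) =
      (m.factorial : ℂ) *
        ∑ s ∈ Finset.powersetCard m (Finset.univ : Finset (Fin N)), ∏ i ∈ s, x i :=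
  trace_antisymmetrizer_eq_esymm_general x

end
end

section
/- (Image of the Brauer antisymmetrizer, symplectic case.) Let N = 2n and Y = diag(y_1, …, y_n, −y_n, …, −y_1), and let l ≥ 1. Then (1/(2l)!)^2 · Σ_{σ ∈ S_{2l}} tr(P_σ · Y_1 Y_2 ⋯ Y_{2l}) = (1/(2l)!) · Σ_{1 ≤ i_1 ≤ ⋯ ≤ i_l ≤ n} y_{i_1}^2 ⋯ y_{i_l}^2, the trace being over (ℂ^N)^{⊗2l}. -/
/-!
Expanding the trace, `∑_σ tr (P_σ D^{⊗m})` for a diagonal `D = diag d` is the sum of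
`∏ₐ d (I a)` over the pairs `(σ, I)` with `I ∘ σ = I`. Sorting `I` shows that every weakly
increasing tuple arises from exactly `m!` such pairs, so the sum is `m! · h_m(d)`.
The generating series of the `h_m(d)` is `∏ᵢ (1 - dᵢ X)⁻¹`; for the eigenvalues `±y_j` of `Y`
the factors pair up to `(1 - y_j² X²)⁻¹`, which gives `h_{2l}(y, -y) = h_l(y²)`.
-/

open Finset

noncomputable section

/-- The diagonal entries of `Y = diag(y_1, …, y_n, -y_n, …, -y_1)` for `N = 2n`, 0-indexed. -/
def diagEnt (N n : ℕ) (y : ℕ → ℂ) : Fin N → ℂ :=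
  fun i => if (i : ℕ) < n then y i
    else if N - n ≤ (i : ℕ) then -y (N - 1 - (i : ℕ)) else 0

open PowerSeries

theorem embAll_diagonal {N m : ℕ} (d : Fin m → Fin N → ℂ) :
    embAll (fun a => Matrix.diagonal (d a)) = Matrix.diagonal fun I => ∏ a, d a (I a) := by
  ext I J
  by_cases h : I = J
  · subst h
    simp [embAll]
  · obtain ⟨a, ha⟩ := Function.ne_iff.mp h
    rw [Matrix.diagonal_apply_ne _ h, embAll, Matrix.of_apply]
    exact prod_eq_zero (mem_univ a) (Matrix.diagonal_apply_ne _ ha)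

theorem Pperm_apply_self {N m : ℕ} (σ : Equiv.Perm (Fin m)) (I : Fin m → Fin N) :
    Pperm σ I I = if I ∘ σ = I then 1 else 0 := by
  have : (I = fun a => I (σ⁻¹ a)) ↔ I ∘ σ = I := Equiv.eq_comp_symm σ I I
  simp only [Pperm, Matrix.of_apply, this]

theorem trace_Pperm_mul_diagonal {N m : ℕ} (σ : Equiv.Perm (Fin m)) (v : (Fin m → Fin N) → ℂ) :
    (Pperm σ * Matrix.diagonal v).trace = ∑ I ∈ univ.filter (fun I => I ∘ σ = I), v I := by
  simp [Matrix.trace, Matrix.mul_diagonal, Pperm_apply_self, sum_filter]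

theorem Tuple.comp_perm_comp_sort_of_monotone {n : ℕ} {α : Type*} [LinearOrder α] {f : Fin n → α}
    (hf : Monotone f) (σ : Equiv.Perm (Fin n)) : (f ∘ σ) ∘ Tuple.sort (f ∘ σ) = f := by
  rw [Tuple.comp_perm_comp_sort_eq_comp_sort, Tuple.sort_eq_refl_iff_monotone.mpr hf]
  rfl

open Classical in
theorem sum_perm_sum_fixed_eq_factorial_nsmul {m : ℕ} {α M : Type*} [LinearOrder α] [Fintype α]
    [AddCommMonoid M] (F : (Fin m → α) → M) (hF : ∀ (σ : Equiv.Perm (Fin m)) I, F (I ∘ σ) = F I) :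
    ∑ σ : Equiv.Perm (Fin m), ∑ I ∈ univ.filter (fun I => I ∘ σ = I), F I =
      m.factorial • ∑ J ∈ univ.filter (fun J : Fin m → α => Monotone J), F J := by
  have hlhs : ∑ σ : Equiv.Perm (Fin m), ∑ I ∈ univ.filter (fun I => I ∘ σ = I), F I =
      ∑ p ∈ univ.filter (fun p : Equiv.Perm (Fin m) × (Fin m → α) => p.2 ∘ p.1 = p.2), F p.2 := by
    simp only [sum_filter, Fintype.sum_prod_type]
  have hrhs : m.factorial • ∑ J ∈ univ.filter (fun J : Fin m → α => Monotone J), F J =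
      ∑ p ∈ (univ : Finset (Equiv.Perm (Fin m))) ×ˢ univ.filter (fun J : Fin m → α => Monotone J),
        F p.2 := by
    simp [sum_product, Fintype.card_perm]
  rw [hlhs, hrhs]
  -- `(σ, I) ↦ ((sort I)⁻¹ * σ, I ∘ sort I)`, with inverse `(τ, J) ↦ (sort (J ∘ τ) * τ, J ∘ τ)`.
  refine sum_nbij' (fun p => ((Tuple.sort p.2)⁻¹ * p.1, p.2 ∘ Tuple.sort p.2))
    (fun q => (Tuple.sort (q.2 ∘ q.1) * q.1, q.2 ∘ q.1)) ?_ ?_ ?_ ?_ ?_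
  · intro p _
    simpa using Tuple.monotone_sort p.2
  · rintro ⟨τ, J⟩ hJ
    simp only [mem_product, mem_filter, mem_univ, true_and] at hJ ⊢
    rw [Equiv.Perm.coe_mul, ← Function.comp_assoc, Tuple.comp_perm_comp_sort_of_monotone hJ]
  · rintro ⟨σ, I⟩ hI
    simp only [mem_filter, mem_univ, true_and] at hI
    have : (I ∘ Tuple.sort I) ∘ ((Tuple.sort I)⁻¹ * σ) = I := by
      rw [Equiv.Perm.coe_mul, Equiv.Perm.coe_inv, Function.comp_assoc,
        ← Function.comp_assoc (Tuple.sort I), Equiv.self_comp_symm, Function.id_comp, hI]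
    simp only [this, mul_inv_cancel_left]
  · rintro ⟨τ, J⟩ hJ
    simp only [mem_product, mem_filter, mem_univ, true_and] at hJ
    simp [Tuple.comp_perm_comp_sort_of_monotone hJ]
  · rintro ⟨σ, I⟩ _
    exact (hF _ I).symm

def geomSeries {R : Type*} [Semiring R] (x : R) : R⟦X⟧ :=
  mk (x ^ ·)

section Semiring

variable {R : Type*} [CommSemiring R]

theorem geomSeries_eq_one_add (x : R) : geomSeries x = 1 + X * (C x * geomSeries x) := by
  ext (_ | k)
  · simp [geomSeries]
  · simp [geomSeries, coeff_succ_X_mul, pow_succ']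

theorem coeff_succ_geomSeries_mul (x : R) (P : R⟦X⟧) (m : ℕ) :
    coeff (m + 1) (geomSeries x * P) = x * coeff m (geomSeries x * P) + coeff (m + 1) P := by
  conv_lhs => rw [geomSeries_eq_one_add, add_mul, mul_assoc, mul_assoc]
  rw [map_add, coeff_succ_X_mul, coeff_C_mul, one_mul, add_comm]

theorem constantCoeff_prod_geomSeries {ι : Type*} [Fintype ι] (g : ι → R) :
    constantCoeff (∏ i, geomSeries (g i)) = 1 := by
  simp [map_prod, geomSeries]

open Classical in
def completeHomogeneous {N : ℕ} (m : ℕ) (g : Fin N → R) : R :=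
  ∑ J ∈ univ.filter (fun J : Fin m → Fin N => Monotone J), ∏ a, g (J a)

theorem completeHomogeneous_zero {N : ℕ} (g : Fin N → R) : completeHomogeneous 0 g = 1 := by
  simp [completeHomogeneous, Subsingleton.monotone]

theorem completeHomogeneous_succ_of_fin_zero (m : ℕ) (g : Fin 0 → R) :
    completeHomogeneous (m + 1) g = 0 := by
  simp [completeHomogeneous]

open Classical in
theorem sum_monotone_apply_zero_eq_zero {N : ℕ} (m : ℕ) (g : Fin (N + 1) → R) :
    ∑ J ∈ univ.filter (fun J : Fin (m + 1) → Fin (N + 1) => Monotone J ∧ J 0 = 0), ∏ a, g (J a) =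
      g 0 * completeHomogeneous m g := by
  rw [completeHomogeneous, mul_sum]
  refine sum_nbij' Fin.tail (fun J => Fin.cons 0 J) ?_ ?_ ?_ ?_ ?_
  · intro J hJ
    simp only [mem_filter, mem_univ, true_and] at hJ ⊢
    exact hJ.1.comp Fin.strictMono_succ.monotone
  · intro J hJ
    simp only [mem_filter, mem_univ, true_and, Fin.cons_zero, and_true] at hJ ⊢
    exact monotone_iff_forall_lt.2 <|
      (Fin.liftFun_cons (· ≤ ·)).2 ⟨fun _ => Fin.zero_le _, monotone_iff_forall_lt.1 hJ⟩
  · intro J hJ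
    simp only [mem_filter, mem_univ, true_and] at hJ
    rw [← hJ.2]
    exact Fin.cons_self_tail J
  · intro J _
    exact Fin.tail_cons _ _
  · intro J hJ
    simp only [mem_filter, mem_univ, true_and] at hJ
    rw [Fin.prod_univ_succ, hJ.2]
    rfl

open Classical in
theorem sum_monotone_apply_zero_ne_zero {N : ℕ} (m : ℕ) (g : Fin (N + 1) → R) :
    ∑ J ∈ univ.filter (fun J : Fin (m + 1) → Fin (N + 1) => Monotone J ∧ ¬J 0 = 0), ∏ a, g (J a) =
      completeHomogeneous (m + 1) (g ∘ Fin.succ) := by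
  rw [completeHomogeneous]
  symm
  refine sum_nbij (fun J => Fin.succ ∘ J) ?_ (Fin.succ_injective _).comp_left.injOn ?_ ?_
  · intro J hJ
    simp only [mem_filter, mem_univ, true_and] at hJ ⊢
    exact ⟨Fin.strictMono_succ.monotone.comp hJ, Fin.succ_ne_zero _⟩
  · intro J hJ
    simp only [coe_filter, mem_univ, true_and, Set.mem_ofPred_eq] at hJ
    have hne : ∀ a, J a ≠ 0 := fun a =>
      (Fin.pos_iff_ne_zero.2 hJ.2 |>.trans_le (hJ.1 (Fin.zero_le a))).ne'
    refine ⟨fun a => (J a).pred (hne a), ?_, funext fun a => Fin.succ_pred _ _⟩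
    simp only [coe_filter, mem_univ, true_and, Set.mem_ofPred_eq]
    exact fun a b hab => Fin.pred_le_pred_iff.2 (hJ.1 hab)
  · intro J _
    rfl

theorem completeHomogeneous_succ_succ {N : ℕ} (m : ℕ) (g : Fin (N + 1) → R) :
    completeHomogeneous (m + 1) g =
      g 0 * completeHomogeneous m g + completeHomogeneous (m + 1) (g ∘ Fin.succ) := by
  rw [completeHomogeneous, ← sum_filter_add_sum_filter_not _ (fun J => J 0 = 0), filter_filter,
    filter_filter, sum_monotone_apply_zero_eq_zero, sum_monotone_apply_zero_ne_zero]

theorem completeHomogeneous_eq_coeff_prod {N : ℕ} (m : ℕ) (g : Fin N → R) :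
    completeHomogeneous m g = coeff m (∏ i, geomSeries (g i)) := by
  induction N generalizing m with
  | zero =>
    cases m with
    | zero => simp [completeHomogeneous_zero]
    | succ m => simp [completeHomogeneous_succ_of_fin_zero, coeff_one]
  | succ N ihN =>
    induction m with
    | zero => rw [completeHomogeneous_zero, coeff_zero_eq_constantCoeff_apply,
        constantCoeff_prod_geomSeries]
    | succ m ihm =>
      rw [completeHomogeneous_succ_succ, ihm, ihN, Fin.prod_univ_succ, coeff_succ_geomSeries_mul]
      rfl

end Semiring

section Ring

variable {R : Type*} [CommRing R]

theorem one_sub_C_mul_X_mul_geomSeries (x : R) : (1 - C x * X) * geomSeries x = 1 := by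
  linear_combination geomSeries_eq_one_add x

theorem geomSeries_mul_geomSeries_neg (x : R) :
    geomSeries x * geomSeries (-x) = expand 2 two_ne_zero (geomSeries (x ^ 2)) := by
  -- Both sides are inverse to `(1 - x X) (1 + x X) = 1 - x² X²`.
  have hprod : (1 - C (x ^ 2) * X ^ 2) * (geomSeries x * geomSeries (-x)) = 1 := by
    calc _ = ((1 - C x * X) * geomSeries x) * ((1 - C (-x) * X) * geomSeries (-x)) := by
          rw [map_neg, map_pow]; ring
      _ = 1 := by rw [one_sub_C_mul_X_mul_geomSeries, one_sub_C_mul_X_mul_geomSeries, one_mul]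
  have hexpand : (1 - C (x ^ 2) * X ^ 2) * expand 2 two_ne_zero (geomSeries (x ^ 2)) = 1 := by
    have := congr_arg (expand 2 two_ne_zero) (one_sub_C_mul_X_mul_geomSeries (x ^ 2))
    rwa [map_mul, map_sub, map_one, map_mul, expand_C, expand_X] at this
  exact left_inv_eq_right_inv (by rw [mul_comm, hprod]) hexpand

end Ring

theorem prod_diagEnt {M : Type*} [CommMonoid M] (n : ℕ) (y : ℕ → ℂ) (F : ℂ → M) :
    ∏ i, F (diagEnt (2 * n) n y i) = ∏ j : Fin n, F (y j) * F (-y j) := by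
  have hentry : ∀ i : Fin (2 * n),
      diagEnt (2 * n) n y i = if (i : ℕ) < n then y i else -y (2 * n - 1 - i) := by
    intro i
    unfold diagEnt
    split_ifs <;> first | rfl | omega
  simp only [hentry]
  rw [Fin.prod_univ_eq_prod_range (fun i => F (if i < n then y i else -y (2 * n - 1 - i))),
    prod_mul_distrib, Fin.prod_univ_eq_prod_range (fun i => F (y i)),
    Fin.prod_univ_eq_prod_range (fun i => F (-y i)), two_mul, prod_range_add,
    ← prod_range_reflect (fun i => F (-y i))]
  congr 1
  · exact prod_congr rfl fun i hi => by rw [if_pos (mem_range.1 hi)]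
  · refine prod_congr rfl fun i hi => ?_
    have := mem_range.1 hi
    rw [if_neg (by omega)]
    congr 3
    omega

theorem completeHomogeneous_diagEnt (n l : ℕ) (y : ℕ → ℂ) :
    completeHomogeneous (2 * l) (diagEnt (2 * n) n y) =
      completeHomogeneous l fun j : Fin n => y j ^ 2 := by
  rw [completeHomogeneous_eq_coeff_prod, completeHomogeneous_eq_coeff_prod,
    prod_diagEnt n y geomSeries]
  simp only [geomSeries_mul_geomSeries_neg, ← map_prod, coeff_expand_mul]

theorem sum_trace_Pperm_mul_embAll_diagonal {N m : ℕ} (d : Fin N → ℂ) :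
    ∑ σ : Equiv.Perm (Fin m), (Pperm σ * embAll fun _ => Matrix.diagonal d).trace =
      m.factorial * completeHomogeneous m d := by
  simp only [embAll_diagonal, trace_Pperm_mul_diagonal]
  rw [sum_perm_sum_fixed_eq_factorial_nsmul _ fun σ I => Equiv.prod_comp σ fun a => d (I a),
    nsmul_eq_mul]
  rfl

open scoped Classical in
theorem ch_brauer_antisymmetrizer_symplectic_general (n l : ℕ) (y : ℕ → ℂ) :
    (1 / ((2 * l).factorial : ℂ)) ^ 2 *
        ∑ σ : Equiv.Perm (Fin (2 * l)),
          Matrix.trace (Pperm σ *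
            embAll (fun _ : Fin (2 * l) => Matrix.diagonal (diagEnt (2 * n) n y))) =
      (1 / ((2 * l).factorial : ℂ)) *
        ∑ f ∈ Finset.univ.filter (fun f : Fin l → Fin n => Monotone f),
          ∏ t, (y (f t)) ^ 2 := by
  have hfac : ((2 * l).factorial : ℂ) ≠ 0 := by exact_mod_cast (2 * l).factorial_ne_zero
  rw [sum_trace_Pperm_mul_embAll_diagonal, completeHomogeneous_diagEnt, completeHomogeneous]
  field_simp

open scoped Classical in
/-- Image of the Brauer antisymmetrizer under the characteristic map, symplectic case:
`(1/(2l)!)² Σ_σ tr (P_σ Y_1 ⋯ Y_{2l}) = (1/(2l)!) h_l(y_1², …, y_n²)`. -/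
theorem ch_brauer_antisymmetrizer_symplectic (n l : ℕ) (hl : 1 ≤ l) (y : ℕ → ℂ) :
    (1 / ((2 * l).factorial : ℂ)) ^ 2 *
        ∑ σ : Equiv.Perm (Fin (2 * l)),
          Matrix.trace (Pperm σ *
            embAll (fun _ : Fin (2 * l) => Matrix.diagonal (diagEnt (2 * n) n y))) =
      (1 / ((2 * l).factorial : ℂ)) *
        ∑ f ∈ Finset.univ.filter (fun f : Fin l → Fin n => Monotone f),
          ∏ t, (y (f t)) ^ 2 :=
  ch_brauer_antisymmetrizer_symplectic_general n l y

end
end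

section
/- For all N ≥ 1, m ≥ 1 and all 1 ≤ a, b ≤ m, the orthogonal Jucys–Murphy operators on (ℂ^N)^{⊗m} pairwise commute: x_a · x_b = x_b · x_a. -/
open Finset

noncomputable section

/-- `P_{ab}`, interchanging tensor factors `a` and `b`. -/
def Pmat {N m : ℕ} (a b : Fin m) : Matrix (Fin m → Fin N) (Fin m → Fin N) ℂ :=
  Pperm (Equiv.swap a b)

/-- The orthogonal contraction operator `Q_{ab} = Σ_{i,j} (e_{ij})_a (e_{i'j'})_b`,
where `i' = N+1-i` (which is `Fin.rev` in 0-indexed terms). -/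
def Qo {N m : ℕ} (a b : Fin m) : Matrix (Fin m → Fin N) (Fin m → Fin N) ℂ :=
  Matrix.of fun I J =>
    (if I b = (I a).rev ∧ J b = (J a).rev then (1 : ℂ) else 0) *
      ∏ c ∈ Finset.univ \ {a, b}, (if I c = J c then (1 : ℂ) else 0)

/-- The orthogonal Jucys–Murphy operators
`x_b = ((N-1)/2)·1 + Σ_{a<b} (P_{ab} - Q_{ab})` on `(ℂ^N)^{⊗m}`. -/
def xO (N m : ℕ) (b : Fin m) : Matrix (Fin m → Fin N) (Fin m → Fin N) ℂ :=
  (((N : ℂ) - 1) / 2) • 1 +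
    ∑ a ∈ Finset.univ.filter (· < b), (Pmat a b - Qo a b)

/-!
Write `x_b = (N-1)/2 + Σ_{a<b} T_{ab}` with `T_{ab} = P_{ab} - Q_{ab}`. For `c < a < b` the term
`T_{ca}` commutes with every `T_{db}`, `d ∉ {c, a}`, since the two act on disjoint tensor factors,
and with `T_{cb} + T_{ab}`: conjugation by `P_{ca}` swaps these two summands, while `Q_{ca}`
annihilates their sum from either side because `Q_{xy} P_{xz} = Q_{xy} Q_{yz}`.
All the operators involved are `0/1` matrices of relations between multi-indices, and each product
needed has a unique intermediate multi-index, so it is the matrix of the composed relation.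
-/

namespace Matrix

variable {ι α : Type*} [Semiring α]

open Classical in
def ofRel (R : ι → ι → Prop) : Matrix ι ι α :=
  of fun i j => if R i j then 1 else 0

theorem ofRel_apply (R : ι → ι → Prop) (i j : ι) [Decidable (R i j)] :
    (ofRel R : Matrix ι ι α) i j = if R i j then 1 else 0 := by
  unfold ofRel; rw [of_apply]; congr

theorem ofRel_congr {R S : ι → ι → Prop} (h : ∀ i j, R i j ↔ S i j) :
    (ofRel R : Matrix ι ι α) = ofRel S :=
  congrArg ofRel (funext₂ fun i j => propext (h i j))

theorem transpose_ofRel (R : ι → ι → Prop) : (ofRel R : Matrix ι ι α)ᵀ = ofRel (flip R) :=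
  rfl

theorem ofRel_mul_ofRel [Fintype ι] {R S : ι → ι → Prop}
    (huniq : ∀ i j k k', R i k → S k j → R i k' → S k' j → k = k') :
    (ofRel R * ofRel S : Matrix ι ι α) = ofRel (Relation.Comp R S) := by
  classical
  ext i j
  simp only [ofRel_apply, mul_apply, ite_zero_mul_ite_zero, mul_one, Finset.sum_boole]
  split_ifs with h
  · obtain ⟨k, hk⟩ := h
    rw [Finset.card_eq_one.mpr ⟨k, ?_⟩, Nat.cast_one]
    ext k'
    simp only [Finset.mem_filter, Finset.mem_univ, true_and, Finset.mem_singleton]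
    exact ⟨fun h' => huniq i j k' k h'.1 h'.2 hk.1 hk.2, fun e => e ▸ hk⟩
  · rw [Finset.card_eq_zero.mpr, Nat.cast_zero]
    exact Finset.filter_eq_empty_iff.mpr fun k _ hk => h ⟨k, hk⟩

end Matrix

open Matrix

section

variable {N m : ℕ}

def QoRel (a b : Fin m) (I J : Fin m → Fin N) : Prop :=
  I b = (I a).rev ∧ J b = (J a).rev ∧ ∀ c, c ≠ a → c ≠ b → I c = J c

theorem Pperm_eq_ofRel (σ : Equiv.Perm (Fin m)) :
    (Pperm σ : Matrix (Fin m → Fin N) _ ℂ) = ofRel fun I J => I = J ∘ σ.symm := by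
  ext I J; rw [ofRel_apply]; rfl

theorem Qo_eq_ofRel (a b : Fin m) :
    (Qo a b : Matrix (Fin m → Fin N) _ ℂ) = ofRel (QoRel a b) := by
  ext I J
  rw [Qo, of_apply, Finset.prod_boole, ite_zero_mul_ite_zero, mul_one, ofRel, of_apply]
  congr 1
  simp [QoRel, and_assoc]

theorem Pperm_mul (σ τ : Equiv.Perm (Fin m)) :
    (Pperm σ * Pperm τ : Matrix (Fin m → Fin N) _ ℂ) = Pperm (σ * τ) := by
  rw [Pperm_eq_ofRel, Pperm_eq_ofRel, Pperm_eq_ofRel, ofRel_mul_ofRel]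
  · refine ofRel_congr fun I J => ?_
    simp [Relation.Comp, Function.comp_def, Equiv.Perm.mul_def]
  · rintro I J K K' - rfl - rfl; rfl

theorem transpose_Pperm (σ : Equiv.Perm (Fin m)) :
    (Pperm σ : Matrix (Fin m → Fin N) _ ℂ)ᵀ = Pperm σ⁻¹ := by
  rw [Pperm_eq_ofRel, Pperm_eq_ofRel, transpose_ofRel]
  refine ofRel_congr fun I J => ?_
  simp only [flip, Equiv.eq_comp_symm, Equiv.Perm.inv_def, Equiv.symm_symm, eq_comm]

theorem transpose_Pmat (a b : Fin m) : (Pmat a b : Matrix (Fin m → Fin N) _ ℂ)ᵀ = Pmat a b := by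
  rw [Pmat, transpose_Pperm, Equiv.swap_inv]

theorem Pperm_mul_Pmat (σ : Equiv.Perm (Fin m)) (a b : Fin m) :
    (Pperm σ * Pmat a b : Matrix (Fin m → Fin N) _ ℂ) = Pmat (σ a) (σ b) * Pperm σ := by
  rw [Pmat, Pmat, Pperm_mul, Pperm_mul, Equiv.mul_swap_eq_swap_mul]

theorem Qo_comm (a b : Fin m) : (Qo a b : Matrix (Fin m → Fin N) _ ℂ) = Qo b a := by
  rw [Qo_eq_ofRel, Qo_eq_ofRel]
  refine ofRel_congr fun I J => ?_
  simp only [QoRel]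
  grind [Fin.rev_rev]

theorem transpose_Qo (a b : Fin m) : (Qo a b : Matrix (Fin m → Fin N) _ ℂ)ᵀ = Qo a b := by
  rw [Qo_eq_ofRel, transpose_ofRel]
  refine ofRel_congr fun I J => ?_
  simp only [flip, QoRel]
  grind

theorem Pperm_mul_Qo (σ : Equiv.Perm (Fin m)) (a b : Fin m) :
    (Pperm σ * Qo a b : Matrix (Fin m → Fin N) _ ℂ) = Qo (σ a) (σ b) * Pperm σ := by
  rw [Pperm_eq_ofRel, Qo_eq_ofRel, Qo_eq_ofRel, ofRel_mul_ofRel, ofRel_mul_ofRel]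
  · refine ofRel_congr fun I J => ?_
    simp only [Relation.Comp, exists_eq_right]
    simp only [Equiv.eq_comp_symm, exists_eq_left', QoRel, Function.comp_apply,
      Equiv.symm_apply_apply]
    rw [← σ.forall_congr_right (q := fun c => c ≠ σ a → c ≠ σ b → I c = J (σ.symm c))]
    simp
  · rintro I J K K' - rfl - rfl; rfl
  · rintro I J K K' h - h' -
    exact σ.symm.surjective.injective_comp_right (h.symm.trans h')

-- The middle index is `J` at `a`, `(J a).rev` at `b` and `I` elsewhere.
theorem QoRel_comp_unique {a b c d : Fin m} (hca : c ≠ a) (hda : d ≠ a)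
    {I J K K' : Fin m → Fin N} (h₁ : QoRel a b I K) (h₂ : QoRel c d K J)
    (h₁' : QoRel a b I K') (h₂' : QoRel c d K' J) : K = K' := by
  unfold QoRel at *
  funext e
  grind

theorem Qo_mul_Qo_eq_ofRel {a b c d : Fin m} (hca : c ≠ a) (hda : d ≠ a) :
    (Qo a b * Qo c d : Matrix (Fin m → Fin N) _ ℂ) =
      ofRel (Relation.Comp (QoRel a b) (QoRel c d)) := by
  rw [Qo_eq_ofRel, Qo_eq_ofRel, ofRel_mul_ofRel fun _ _ _ _ => QoRel_comp_unique hca hda]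

theorem Qo_mul_Pmat {x y z : Fin m} (hxy : x ≠ y) (hxz : x ≠ z) (hyz : y ≠ z) :
    (Qo x y * Pmat x z : Matrix (Fin m → Fin N) _ ℂ) = Qo x y * Qo y z := by
  rw [Qo_mul_Qo_eq_ofRel hxy.symm hxz.symm, Pmat, Pperm_eq_ofRel, Qo_eq_ofRel, ofRel_mul_ofRel]
  · refine ofRel_congr fun I J => ?_
    simp only [Relation.Comp, exists_eq_right, QoRel, Function.comp_apply, Equiv.symm_swap]
    constructor
    · intro h
      refine ⟨Function.update (Function.update I x (J x)) y (J x).rev, ?_⟩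
      grind
    · rintro ⟨K, h⟩
      grind
  · rintro I J K K' - rfl - rfl; rfl

theorem Qo_mul_Qo_comm {a b c d : Fin m} (hac : a ≠ c) (had : a ≠ d) (hbc : b ≠ c) (hbd : b ≠ d) :
    (Qo a b * Qo c d : Matrix (Fin m → Fin N) _ ℂ) = Qo c d * Qo a b := by
  rw [Qo_mul_Qo_eq_ofRel hac.symm had.symm, Qo_mul_Qo_eq_ofRel hac hbc]
  refine ofRel_congr fun I J => ?_
  simp only [Relation.Comp, QoRel]
  constructor
  · rintro ⟨K, h⟩
    refine ⟨Function.update (Function.update I c (J c)) d (J d), ?_⟩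
    grind
  · rintro ⟨K, h⟩
    refine ⟨Function.update (Function.update I a (J a)) b (J b), ?_⟩
    grind

def Tmat (a b : Fin m) : Matrix (Fin m → Fin N) (Fin m → Fin N) ℂ :=
  Pmat a b - Qo a b

theorem xO_eq_smul_one_add_sum_Tmat (b : Fin m) :
    xO N m b = (((N : ℂ) - 1) / 2) • 1 + ∑ a ∈ univ.filter (· < b), Tmat a b :=
  rfl

theorem transpose_Tmat (a b : Fin m) : (Tmat a b : Matrix (Fin m → Fin N) _ ℂ)ᵀ = Tmat a b := by
  rw [Tmat, transpose_sub, transpose_Pmat, transpose_Qo]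

theorem Pperm_mul_Tmat (σ : Equiv.Perm (Fin m)) (a b : Fin m) :
    (Pperm σ * Tmat a b : Matrix (Fin m → Fin N) _ ℂ) = Tmat (σ a) (σ b) * Pperm σ := by
  rw [Tmat, Tmat, mul_sub, sub_mul, Pperm_mul_Pmat, Pperm_mul_Qo]

theorem Qo_mul_Tmat_add_Tmat {x y z : Fin m} (hxy : x ≠ y) (hxz : x ≠ z) (hyz : y ≠ z) :
    (Qo x y * (Tmat x z + Tmat y z) : Matrix (Fin m → Fin N) _ ℂ) = 0 := by
  have hyx : (Qo x y * Pmat y z : Matrix (Fin m → Fin N) _ ℂ) = Qo x y * Qo x z := by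
    rw [Qo_comm x y, Qo_mul_Pmat hxy.symm hyz hxz]
  rw [Tmat, Tmat, mul_add, mul_sub, mul_sub, Qo_mul_Pmat hxy hxz hyz, hyx]
  abel

theorem Tmat_add_Tmat_mul_Qo {x y z : Fin m} (hxy : x ≠ y) (hxz : x ≠ z) (hyz : y ≠ z) :
    ((Tmat x z + Tmat y z) * Qo x y : Matrix (Fin m → Fin N) _ ℂ) = 0 := by
  rw [← transpose_inj, transpose_mul, transpose_add, transpose_Tmat, transpose_Tmat, transpose_Qo,
    Qo_mul_Tmat_add_Tmat hxy hxz hyz, transpose_zero]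

theorem commute_Tmat_Tmat_add_Tmat {x y z : Fin m} (hxy : x ≠ y) (hxz : x ≠ z) (hyz : y ≠ z) :
    Commute (Tmat x y : Matrix (Fin m → Fin N) _ ℂ) (Tmat x z + Tmat y z) := by
  have hconj : (Pmat x y * (Tmat x z + Tmat y z) : Matrix (Fin m → Fin N) _ ℂ)
      = (Tmat x z + Tmat y z) * Pmat x y := by
    rw [Pmat, mul_add, Pperm_mul_Tmat, Pperm_mul_Tmat, Equiv.swap_apply_left,
      Equiv.swap_apply_right, Equiv.swap_apply_of_ne_of_ne hxz.symm hyz.symm, ← add_mul, add_comm]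
  rw [Commute, SemiconjBy, Tmat, sub_mul, mul_sub, Qo_mul_Tmat_add_Tmat hxy hxz hyz,
    Tmat_add_Tmat_mul_Qo hxy hxz hyz, hconj]

theorem commute_Tmat_of_disjoint {a b c d : Fin m} (hac : a ≠ c) (had : a ≠ d) (hbc : b ≠ c)
    (hbd : b ≠ d) : Commute (Tmat a b : Matrix (Fin m → Fin N) _ ℂ) (Tmat c d) := by
  have hP : Commute (Pmat a b : Matrix (Fin m → Fin N) _ ℂ) (Tmat c d) := by
    rw [Commute, SemiconjBy, Pmat, Pperm_mul_Tmat, Equiv.swap_apply_of_ne_of_ne hac.symm hbc.symm,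
      Equiv.swap_apply_of_ne_of_ne had.symm hbd.symm]
  have hQ : Commute (Qo a b : Matrix (Fin m → Fin N) _ ℂ) (Tmat c d) := by
    refine Commute.sub_right ?_ (Qo_mul_Qo_comm hac had hbc hbd)
    rw [Commute, SemiconjBy, Pmat, Pperm_mul_Qo, Equiv.swap_apply_of_ne_of_ne hac had,
      Equiv.swap_apply_of_ne_of_ne hbc hbd]
  exact hP.sub_left hQ

theorem commute_Tmat_sum_Tmat {x y z : Fin m} (hxy : x < y) (hyz : y < z) :
    Commute (Tmat x y : Matrix (Fin m → Fin N) _ ℂ) (∑ d ∈ univ.filter (· < z), Tmat d z) := by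
  have hy : y ∈ univ.filter (· < z) := by simpa using hyz
  have hx : x ∈ (univ.filter (· < z)).erase y := by simpa using ⟨hxy.ne, hxy.trans hyz⟩
  rw [← add_sum_erase _ _ hy, ← add_sum_erase _ _ hx, ← add_assoc, add_comm (Tmat y z)]
  refine (commute_Tmat_Tmat_add_Tmat hxy.ne (hxy.trans hyz).ne hyz.ne).add_right
    (Commute.sum_right _ _ _ fun d hd => ?_)
  simp only [mem_erase, mem_filter, mem_univ, true_and] at hd
  exact commute_Tmat_of_disjoint (Ne.symm hd.1) (hxy.trans hyz).ne (Ne.symm hd.2.1) hyz.ne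

end

theorem jucysMurphy_commute_general (N m : ℕ) (a b : Fin m) :
    xO N m a * xO N m b = xO N m b * xO N m a := by
  wlog hab : a < b generalizing a b
  · rcases (not_lt.mp hab).lt_or_eq with hba | rfl
    · exact (this b a hba).symm
    · rfl
  rw [xO_eq_smul_one_add_sum_Tmat, xO_eq_smul_one_add_sum_Tmat]
  have hsum : Commute (∑ c ∈ univ.filter (· < a), Tmat c a : Matrix (Fin m → Fin N) _ ℂ)
      (∑ d ∈ univ.filter (· < b), Tmat d b) :=
    Commute.sum_left _ _ _ fun c hc => commute_Tmat_sum_Tmat (by simpa using hc) hab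
  have hscalar (X : Matrix (Fin m → Fin N) (Fin m → Fin N) ℂ) :
      Commute ((((N : ℂ) - 1) / 2) • 1) X :=
    (Commute.one_left X).smul_left _
  exact ((hscalar _).add_right (hscalar _)).add_left (((hscalar _).symm).add_right hsum)

/-- The orthogonal Jucys–Murphy operators pairwise commute. -/
theorem jucysMurphy_commute (N m : ℕ) (hN : 1 ≤ N) (hm : 1 ≤ m) (a b : Fin m) :
    xO N m a * xO N m b = xO N m b * xO N m a :=
  jucysMurphy_commute_general N m a b

end
end

section
/- (Resolvent identity for symmetric-group Jucys–Murphy elements.) In the group algebra ℂ[S_m] with m ≥ 2, let x_b := Σ_{a=1}^{b−1} (a b) denote the Jucys–Murphy elements and s := (m−1, m) the simple transposition. For every u ∈ ℂ such that u − x_m and u − x_{m−1} are invertible in ℂ[S_m], one has (u − x_m)^{-1} = s (u − x_{m−1})^{-1} s + (u − x_{m−1})^{-1} ( s + (u − x_m)^{-1} ) (u − x_{m−1})^{-1}. -/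
/-!
Put `A = u - x_m`, `B = u - x_{m-1}`. Since `x_m = s x_{m-1} s + s` and `s² = 1`, we get
`A = s B s - s`, i.e. `s A = B s - 1`; and `A`, `B` commute because Jucys–Murphy elements do
(`x_j` commutes with every permutation of the letters below `j`, as conjugating by one permutes
the transpositions `(c j)`). Multiplying the right-hand side by `A` then gives
`s B⁻¹ s A = 1 - s B⁻¹` and `B⁻¹ (s + A⁻¹) B⁻¹ A = B⁻¹ (s A + 1) B⁻¹ = s B⁻¹`,
which sum to `1`.
-/

open Finset

noncomputable section

/-- The Jucys–Murphy elements of the group algebra `ℂ[S_m]`: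
`x_b = Σ_{a < b} (a b)` (so `x_1 = 0`). -/
def jmElt (m : ℕ) (b : Fin m) : MonoidAlgebra ℂ (Equiv.Perm (Fin m)) :=
  ∑ a ∈ Finset.univ.filter (· < b),
    MonoidAlgebra.of ℂ (Equiv.Perm (Fin m)) (Equiv.swap a b)

theorem Units.inv_eq_conj_inv_add_inv_mul_inv {R : Type*} [Ring R] {s : R} (A B : Rˣ)
    (hs : s * s = 1) (hAB : Commute (A : R) B) (hA : (A : R) = s * B * s - s) :
    (↑A⁻¹ : R) = s * ↑B⁻¹ * s + ↑B⁻¹ * (s + ↑A⁻¹) * ↑B⁻¹ := by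
  refine Units.inv_eq_of_mul_eq_one_left (u := A) ?_
  have hsA : s * A = B * s - 1 := by
    rw [hA, mul_sub, ← mul_assoc, ← mul_assoc, hs, one_mul]
  have hBA : (↑B⁻¹ * A : R) = A * ↑B⁻¹ := hAB.symm.units_inv_left.eq
  have h₁ : s * ↑B⁻¹ * s * A = 1 - s * ↑B⁻¹ := by
    rw [mul_assoc _ s, hsA, mul_sub, mul_one, mul_assoc s, ← mul_assoc _ (B : R),
      Units.inv_mul, one_mul, hs]
  have h₂ : ↑B⁻¹ * (s + ↑A⁻¹) * ↑B⁻¹ * A = s * ↑B⁻¹ := by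
    rw [mul_assoc _ _ (A : R), hBA, ← mul_assoc, mul_assoc _ (s + _), add_mul, hsA,
      Units.inv_mul, sub_add_cancel, ← mul_assoc, Units.inv_mul, one_mul]
  rw [add_mul, h₁, h₂, sub_add_cancel]

theorem Ring.inverse_smul_one_sub_eq_conj_add {K R : Type*} [CommSemiring K] [Ring R]
    [Algebra K R] (u : K) {s X Y : R} (hs : s * s = 1) (hXY : Commute X Y)
    (hY : Y = s * X * s + s) (hA : IsUnit (u • 1 - Y)) (hB : IsUnit (u • 1 - X)) :
    Ring.inverse (u • 1 - Y) =
      s * Ring.inverse (u • 1 - X) * s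
        + Ring.inverse (u • 1 - X) * (s + Ring.inverse (u • 1 - Y))
          * Ring.inverse (u • 1 - X) := by
  obtain ⟨A, hA⟩ := hA
  obtain ⟨B, hB⟩ := hB
  rw [← hA, ← hB, Ring.inverse_unit, Ring.inverse_unit]
  refine Units.inv_eq_conj_inv_add_inv_mul_inv A B hs ?_ ?_
  · have hu (Z : R) : Commute (u • 1) Z := (Commute.one_left Z).smul_left u
    rw [hA, hB]
    exact (hu _).sub_left ((hu Y).symm.sub_right hXY.symm)
  · rw [hA, hB, hY, mul_sub, sub_mul, mul_smul_comm, mul_one, smul_mul_assoc, hs]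
    abel

section JucysMurphy

variable {m : ℕ}

theorem commute_of_jmElt_of_subset {σ : Equiv.Perm (Fin m)} {j : Fin m}
    (hσ : {c | σ c ≠ c} ⊆ univ.filter (· < j)) :
    Commute (MonoidAlgebra.of ℂ _ σ) (jmElt m j) := by
  have hσj : σ j = j := by
    by_contra h
    simpa using hσ h
  calc MonoidAlgebra.of ℂ _ σ * jmElt m j
      = ∑ c ∈ univ.filter (· < j),
          MonoidAlgebra.of ℂ _ (Equiv.swap (σ c) j) * MonoidAlgebra.of ℂ _ σ := by
        rw [jmElt, mul_sum]
        refine sum_congr rfl fun c _ => ?_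
        rw [← map_mul, Equiv.mul_swap_eq_swap_mul, hσj, map_mul]
    _ = jmElt m j * MonoidAlgebra.of ℂ _ σ := by
        rw [σ.sum_comp _ (fun c => MonoidAlgebra.of ℂ _ (Equiv.swap c j) * _) hσ, jmElt,
          sum_mul]

theorem jmElt_commute (i j : Fin m) : Commute (jmElt m i) (jmElt m j) := by
  wlog hij : i < j generalizing i j
  · rcases (not_lt.mp hij).eq_or_lt with rfl | hji
    · exact Commute.refl _
    · exact (this j i hji).symm
  refine Commute.sum_left _ _ _ fun a ha => commute_of_jmElt_of_subset fun c hc => ?_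
  obtain ⟨-, rfl | rfl⟩ := Equiv.swap_apply_ne_self_iff.mp hc
  · simpa using (mem_filter.mp ha).2.trans hij
  · simpa using hij

theorem jmElt_eq_conj_add {i j : Fin m} (hij : (i : ℕ) + 1 = j) :
    jmElt m j = MonoidAlgebra.of ℂ _ (Equiv.swap i j) * jmElt m i
        * MonoidAlgebra.of ℂ _ (Equiv.swap i j) + MonoidAlgebra.of ℂ _ (Equiv.swap i j) := by
  have hlt : univ.filter (· < j) = insert i (univ.filter (· < i)) := by
    ext c
    simp only [mem_filter, mem_univ, true_and, mem_insert, Fin.lt_def, Fin.ext_iff]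
    omega
  rw [jmElt, hlt, sum_insert (by simp), add_comm, jmElt, mul_sum, sum_mul]
  congr 1
  refine sum_congr rfl fun c hc => ?_
  have hci : c < i := (mem_filter.mp hc).2
  have hcj : c ≠ j := (hci.trans (Fin.lt_def.mpr (by omega))).ne
  have hconj := Equiv.swap_apply_apply (Equiv.swap i j) c i
  rw [Equiv.swap_apply_of_ne_of_ne hci.ne hcj, Equiv.swap_apply_left, Equiv.swap_inv] at hconj
  rw [← map_mul, ← map_mul, ← hconj]

end JucysMurphy

/-- Here `i`, `j` are the 0-indexed positions `m-2`, `m-1`, so `x_{m-1} = jmElt m i`,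
`x_m = jmElt m j` and `s = (m-1, m)` is `Equiv.swap i j`. -/
theorem resolvent_identity_symmetric_group (m : ℕ) (hm : 2 ≤ m)
    (i j : Fin m) (hi : (i : ℕ) = m - 2) (hj : (j : ℕ) = m - 1) (u : ℂ)
    (hA : IsUnit (u • 1 - jmElt m j)) (hB : IsUnit (u • 1 - jmElt m i)) :
    Ring.inverse (u • 1 - jmElt m j) =
      MonoidAlgebra.of ℂ (Equiv.Perm (Fin m)) (Equiv.swap i j)
          * Ring.inverse (u • 1 - jmElt m i)
          * MonoidAlgebra.of ℂ (Equiv.Perm (Fin m)) (Equiv.swap i j)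
      + Ring.inverse (u • 1 - jmElt m i)
          * (MonoidAlgebra.of ℂ (Equiv.Perm (Fin m)) (Equiv.swap i j)
              + Ring.inverse (u • 1 - jmElt m j))
          * Ring.inverse (u • 1 - jmElt m i) := by
  have hs : MonoidAlgebra.of ℂ _ (Equiv.swap i j) * MonoidAlgebra.of ℂ _ (Equiv.swap i j)
      = 1 := by
    rw [← map_mul, Equiv.swap_mul_self, map_one]
  exact Ring.inverse_smul_one_sub_eq_conj_add u hs (jmElt_commute i j)
    (jmElt_eq_conj_add (by omega)) hA hB

end
end

section
/- (Hook–content identity underlying the hook dimension formula.) Let λ be a Young diagram and (k,l) a box of λ such that μ := λ with the box (k,l) removed is again a Young diagram (i.e. l = λ_k and k = λ'_l). For a Young diagram ν put d_ν(i,j) := ν_i + ν_j − i − j + 1 if i ≤ j and d_ν(i,j) := −ν'_i − ν'_j + i + j − 1 if i > j. For t ∈ ℂ set c★ := (t−1)/2 + l − k and c(i,j) := (t−1)/2 + j − i. Then for every t ∈ ℂ for which c★ ≠ 0 and c★ + c(i,j) ≠ 0 for all (i,j) ∈ μ and ∏_{(i,j)∈μ}(t − 1 + d_μ(i,j)) ≠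 0, one has: (c★ + (t−1)/2)·(2c★ + 1)/(2c★) · ∏_{(i,j)∈μ} ((c★ + c(i,j))^2 − 1)/((c★ + c(i,j))^2) = ∏_{(i,j)∈λ}(t − 1 + d_λ(i,j)) / ∏_{(i,j)∈μ}(t − 1 + d_μ(i,j)). -/
/-!
Put `z = t - 1 + (l - k)`, so that `c★ + c(i, j) = z + j - i`.
Along the rim of `μ` let `U x = z + μ_x - x` and `V y = z + y - μ'_y` (`z` plus the content of
the first cell outside row `x`, resp. below column `y`), and for a row index `n` put
`N n = U n * ∏_{x<n} U x * ∏_{y<μ_n} V y`, `D n = ∏_{x<n} (U x - 1) * ∏_{y<μ_n} (V y + 1)`.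
Each row telescopes, so `z * ∏_μ ((z + c)^2 - 1) / (z + c)^2 = N n / D n` for `n` the number of
rows; and `N n / D n` does not depend on `n`, because along each horizontal run of the rim the
column lengths are constant and the factors telescope again.

Removing the corner `(k, l)` changes `d` only on the cross of cells `(min x k, max x k)` and
`(max y l, min y l)`, where the factors `t - 1 + d` of `μ` and `λ` are `U x - 1` and `U x`,
resp. `V y + 1` and `V y`. Hence `∏_λ / ∏_μ = (2c★ + 1) / (2c★) * N n / D n`, with `n = l`
if `k ≤ l` and `n = μ'_k` if `k > l`, and the two ratios match.
-/

open Finset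

noncomputable section

/-- The quantity `d_ν(i,j)` of the hook dimension formula, for the 0-indexed box
`b = (i₀, j₀)` (so `i = i₀ + 1`, `j = j₀ + 1` in 1-indexed terms):
`d_ν(i,j) = ν_i + ν_j - i - j + 1` if `i ≤ j`, and
`d_ν(i,j) = -ν'_i - ν'_j + i + j - 1` if `i > j`. -/
def dval (ν : YoungDiagram) (b : ℕ × ℕ) : ℤ :=
  if b.1 ≤ b.2 then (ν.rowLen b.1 : ℤ) + ν.rowLen b.2 - b.1 - b.2 - 1
  else -(ν.colLen b.1 : ℤ) - ν.colLen b.2 + b.1 + b.2 + 1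

namespace YoungDiagram

theorem colLen_eq_of_rowLen_le (μ : YoungDiagram) {m y : ℕ} (hle : μ.rowLen m ≤ y)
    (hlt : ∀ i < m, y < μ.rowLen i) : μ.colLen y = m := by
  refine eq_of_forall_lt_iff fun i => ?_
  rw [← mem_iff_lt_colLen, mem_iff_lt_rowLen]
  refine ⟨fun h => ?_, hlt i⟩
  by_contra! him
  exact absurd (h.trans_le (μ.rowLen_anti m i him)) hle.not_gt

theorem rowLen_colLen_zero (μ : YoungDiagram) : μ.rowLen (μ.colLen 0) = 0 := by
  by_contra h
  exact (mem_iff_lt_colLen.1 (mem_iff_lt_rowLen.2 (Nat.pos_of_ne_zero h))).false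

theorem prod_cells {M : Type*} [CommMonoid M] (μ : YoungDiagram) (f : ℕ × ℕ → M) :
    ∏ b ∈ μ.cells, f b = ∏ i ∈ range (μ.colLen 0), ∏ j ∈ range (μ.rowLen i), f (i, j) := by
  refine prod_finset_product _ _ _ fun ⟨i, j⟩ => ?_
  simp only [mem_cells, mem_range, ← mem_iff_lt_rowLen]
  exact ⟨fun h => ⟨mem_iff_lt_colLen.1 (μ.up_left_mem le_rfl (Nat.zero_le j) h), h⟩, And.right⟩

end YoungDiagram

namespace HookContent

open YoungDiagram

variable {R : Type*} [CommRing R]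

theorem mul_prod_Ico_add_one (w : R) {a b : ℕ} (hab : a ≤ b) :
    (w + a) * ∏ y ∈ Ico a b, (w + y + 1) = (w + b) * ∏ y ∈ Ico a b, (w + y) := by
  have hshift := prod_Ico_add' (fun y : ℕ => w + y) a b 1
  push_cast at hshift
  rw [mul_comm (w + b), ← prod_Ico_succ_top hab (fun y : ℕ => w + y),
    prod_eq_prod_Ico_succ_bot (Nat.lt_succ_of_le hab), ← hshift]
  simp only [add_assoc]

theorem prod_range_sq_sub_one_telescope (w : R) (r : ℕ) :
    (w + r - 1) * w * ∏ j ∈ range r, ((w + j) ^ 2 - 1) =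
      (w - 1) * (w + r) * ∏ j ∈ range r, (w + j) ^ 2 := by
  have hlow : (w - 1) * ∏ j ∈ range r, (w + j) = (w + r - 1) * ∏ j ∈ range r, (w - 1 + j) := by
    have h := mul_prod_Ico_add_one (w - 1) (Nat.zero_le r)
    simp only [← range_eq_Ico, Nat.cast_zero, add_zero] at h
    rw [add_sub_right_comm, ← h]
    exact congrArg _ (prod_congr rfl fun j _ => by ring)
  have hhigh := mul_prod_Ico_add_one w (Nat.zero_le r)
  simp only [← range_eq_Ico, Nat.cast_zero, add_zero] at hhigh
  have hsplit : ∏ j ∈ range r, ((w + j) ^ 2 - 1) =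
      (∏ j ∈ range r, (w - 1 + j)) * ∏ j ∈ range r, (w + j + 1) := by
    rw [← prod_mul_distrib]
    exact prod_congr rfl fun j _ => by ring
  rw [hsplit, prod_pow]
  linear_combination (-(w * ∏ j ∈ range r, (w + j + 1))) * hlow +
    ((w - 1) * ∏ j ∈ range r, (w + j)) * hhigh

section Boundary

variable (μ : YoungDiagram) (z : R)

def rowOuter (x : ℕ) : R := z + μ.rowLen x - x

def colOuter (y : ℕ) : R := z + y - μ.colLen y

def boundaryNum (n : ℕ) : R :=
  rowOuter μ z n * (∏ x ∈ range n, rowOuter μ z x) * ∏ y ∈ range (μ.rowLen n), colOuter μ z y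

def boundaryDen (n : ℕ) : R :=
  (∏ x ∈ range n, (rowOuter μ z x - 1)) * ∏ y ∈ range (μ.rowLen n), (colOuter μ z y + 1)

theorem mul_prod_Ico_colOuter {a b m : ℕ} (hab : a ≤ b) (hcol : ∀ y ∈ Ico a b, μ.colLen y = m) :
    (z - m + a) * ∏ y ∈ Ico a b, (colOuter μ z y + 1) =
      (z - m + b) * ∏ y ∈ Ico a b, colOuter μ z y := by
  have hV : ∀ y ∈ Ico a b, colOuter μ z y = z - m + y := fun y hy => by
    rw [colOuter, hcol y hy]
    ring
  rw [prod_congr rfl hV, prod_congr rfl fun y hy => congrArg (· + 1) (hV y hy)]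
  exact mul_prod_Ico_add_one _ hab

theorem rowOuter_mul_prod_Ico {n m : ℕ} (hnm : n ≤ m) :
    rowOuter μ z n * (∏ x ∈ Ico n m, (rowOuter μ z x - 1)) *
        ∏ y ∈ Ico (μ.rowLen m) (μ.rowLen n), colOuter μ z y =
      rowOuter μ z m * (∏ x ∈ Ico n m, rowOuter μ z x) *
        ∏ y ∈ Ico (μ.rowLen m) (μ.rowLen n), (colOuter μ z y + 1) := by
  induction m, hnm using Nat.le_induction with
  | base => simp
  | succ m hnm ih =>
    have hab := μ.rowLen_anti m (m + 1) m.le_succ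
    have hbc := μ.rowLen_anti n m hnm
    -- the columns ending between rows `m` and `m + 1` all have length `m + 1`
    have hrun := mul_prod_Ico_colOuter μ z hab (m := m + 1) fun y hy =>
      colLen_eq_of_rowLen_le μ (mem_Ico.1 hy).1 fun i hi =>
        (mem_Ico.1 hy).2.trans_le (μ.rowLen_anti i m (Nat.lt_succ_iff.1 hi))
    have hstep : (rowOuter μ z m - 1) * ∏ y ∈ Ico (μ.rowLen (m + 1)) (μ.rowLen m), colOuter μ z y =
        rowOuter μ z (m + 1) *
          ∏ y ∈ Ico (μ.rowLen (m + 1)) (μ.rowLen m), (colOuter μ z y + 1) := by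
      have hm : rowOuter μ z m - 1 = z - ↑(m + 1) + μ.rowLen m := by
        rw [rowOuter]; push_cast; ring
      have hm' : rowOuter μ z (m + 1) = z - ↑(m + 1) + μ.rowLen (m + 1) := by
        rw [rowOuter]; ring
      rw [hm, hm']
      exact hrun.symm
    rw [prod_Ico_succ_top hnm, prod_Ico_succ_top hnm,
      ← prod_Ico_consecutive (fun y => colOuter μ z y) hab hbc,
      ← prod_Ico_consecutive (fun y => colOuter μ z y + 1) hab hbc]
    linear_combination
      ((rowOuter μ z m - 1) * ∏ y ∈ Ico (μ.rowLen (m + 1)) (μ.rowLen m), colOuter μ z y) * ih +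
      (rowOuter μ z m * (∏ x ∈ Ico n m, rowOuter μ z x) *
        ∏ y ∈ Ico (μ.rowLen m) (μ.rowLen n), (colOuter μ z y + 1)) * hstep

theorem boundaryNum_mul_boundaryDen_comm (n m : ℕ) :
    boundaryNum μ z n * boundaryDen μ z m = boundaryNum μ z m * boundaryDen μ z n := by
  wlog hnm : n ≤ m generalizing n m
  · exact (this m n (le_of_not_ge hnm)).symm
  have hrow := μ.rowLen_anti n m hnm
  rw [boundaryNum, boundaryNum, boundaryDen, boundaryDen,
    ← prod_range_mul_prod_Ico (fun x => rowOuter μ z x) hnm,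
    ← prod_range_mul_prod_Ico (fun x => rowOuter μ z x - 1) hnm,
    ← prod_range_mul_prod_Ico (fun y => colOuter μ z y) hrow,
    ← prod_range_mul_prod_Ico (fun y => colOuter μ z y + 1) hrow]
  linear_combination
    ((∏ x ∈ range n, rowOuter μ z x) * (∏ x ∈ range n, (rowOuter μ z x - 1)) *
      (∏ y ∈ range (μ.rowLen m), colOuter μ z y) *
      ∏ y ∈ range (μ.rowLen m), (colOuter μ z y + 1)) * rowOuter_mul_prod_Ico μ z hnm

theorem mul_prod_rows_telescope (n : ℕ) :
    z * ∏ i ∈ range n,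
        ((rowOuter μ z i - 1) * ∏ j ∈ range (μ.rowLen i), ((z - i + j) ^ 2 - 1)) =
      (z - n) * ∏ i ∈ range n, (rowOuter μ z i * ∏ j ∈ range (μ.rowLen i), (z - i + j) ^ 2) := by
  induction n with
  | zero => simp
  | succ n ih =>
    rw [prod_range_succ, prod_range_succ, rowOuter]
    push_cast
    linear_combination
      ((z + μ.rowLen n - n - 1) * ∏ j ∈ range (μ.rowLen n), ((z - n + j) ^ 2 - 1)) * ih +
      (∏ i ∈ range n, (rowOuter μ z i * ∏ j ∈ range (μ.rowLen i), (z - i + j) ^ 2)) *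
        prod_range_sq_sub_one_telescope (z - n) (μ.rowLen n)

theorem mul_prod_cells_mul_boundaryDen :
    z * (∏ b ∈ μ.cells, ((z - b.1 + b.2) ^ 2 - 1)) * boundaryDen μ z (μ.colLen 0) =
      (∏ b ∈ μ.cells, (z - b.1 + b.2) ^ 2) * boundaryNum μ z (μ.colLen 0) := by
  have hrows := mul_prod_rows_telescope μ z (μ.colLen 0)
  rw [prod_mul_distrib, prod_mul_distrib] at hrows
  rw [prod_cells μ, prod_cells μ, boundaryNum, boundaryDen, rowOuter, rowLen_colLen_zero]
  simp only [range_zero, prod_empty, mul_one, Nat.cast_zero, add_zero]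
  linear_combination hrows

theorem boundaryDen_colLen_zero_ne_zero [IsDomain R]
    (hz : ∀ b ∈ μ.cells, z - b.1 + b.2 ≠ 0) : boundaryDen μ z (μ.colLen 0) ≠ 0 := by
  rw [boundaryDen, rowLen_colLen_zero, range_zero, prod_empty, mul_one, prod_ne_zero_iff]
  intro i hi
  have hpos : 0 < μ.rowLen i := mem_iff_lt_rowLen.1 (mem_iff_lt_colLen.2 (mem_range.1 hi))
  have hlast := hz (i, μ.rowLen i - 1) ((mem_cells _).2 (mem_iff_lt_rowLen.2 (by omega)))
  rw [rowOuter]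
  rw [Nat.cast_sub hpos] at hlast
  convert hlast using 1
  push_cast
  ring

end Boundary

def upperCross (k x : ℕ) : ℕ × ℕ := (min x k, max x k)

def lowerCross (l y : ℕ) : ℕ × ℕ := (max y l, min y l)

def OnCross (k l : ℕ) (b : ℕ × ℕ) : Prop :=
  b.1 ≤ b.2 ∧ (b.1 = k ∨ b.2 = k) ∨ b.2 < b.1 ∧ (b.1 = l ∨ b.2 = l)

instance (k l : ℕ) : DecidablePred (OnCross k l) := fun _ => inferInstanceAs (Decidable (_ ∨ _))

theorem upperCross_injective (k : ℕ) : Function.Injective (upperCross k) := by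
  intro x x' h
  simp only [upperCross, Prod.mk.injEq] at h
  omega

theorem lowerCross_injective (l : ℕ) : Function.Injective (lowerCross l) := by
  intro y y' h
  simp only [lowerCross, Prod.mk.injEq] at h
  omega

theorem exists_upperCross_eq_iff {k : ℕ} {b : ℕ × ℕ} :
    (∃ x, upperCross k x = b) ↔ b.1 ≤ b.2 ∧ (b.1 = k ∨ b.2 = k) := by
  obtain ⟨i, j⟩ := b
  simp only [upperCross, Prod.mk.injEq]
  constructor
  · rintro ⟨x, rfl, rfl⟩
    omega
  · rintro ⟨hij, rfl | rfl⟩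
    · exact ⟨j, by omega, by omega⟩
    · exact ⟨i, by omega, by omega⟩

theorem exists_lowerCross_eq_iff {l : ℕ} {b : ℕ × ℕ} :
    (∃ y, y ≠ l ∧ lowerCross l y = b) ↔ b.2 < b.1 ∧ (b.1 = l ∨ b.2 = l) := by
  obtain ⟨i, j⟩ := b
  simp only [lowerCross, Prod.mk.injEq]
  constructor
  · rintro ⟨y, hy, rfl, rfl⟩
    omega
  · rintro ⟨hij, rfl | rfl⟩
    · exact ⟨j, by omega, by omega, by omega⟩
    · exact ⟨i, by omega, by omega, by omega⟩

theorem prod_filter_onCross {M : Type*} [CommMonoid M] (ν : YoungDiagram) {k l : ℕ}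
    {X Y : Finset ℕ} (hX : ∀ x, upperCross k x ∈ ν ↔ x ∈ X)
    (hY : ∀ y, lowerCross l y ∈ ν ∧ y ≠ l ↔ y ∈ Y) (f : ℕ × ℕ → M) :
    ∏ b ∈ ν.cells.filter (OnCross k l), f b =
      (∏ x ∈ X, f (upperCross k x)) * ∏ y ∈ Y, f (lowerCross l y) := by
  have hdisj : Disjoint (X.image (upperCross k)) (Y.image (lowerCross l)) := by
    simp only [disjoint_left, mem_image, not_exists, not_and]
    rintro _ ⟨x, -, rfl⟩ y hy h
    have hyl := ((hY y).2 hy).2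
    simp only [upperCross, lowerCross, Prod.mk.injEq] at h
    omega
  rw [← prod_image (upperCross_injective k).injOn, ← prod_image (lowerCross_injective l).injOn,
    ← prod_union hdisj]
  refine prod_congr (ext fun b => ?_) fun _ _ => rfl
  simp only [mem_filter, mem_cells, OnCross, mem_union, mem_image, ← hX, ← hY,
    ← exists_upperCross_eq_iff, ← exists_lowerCross_eq_iff]
  constructor
  · rintro ⟨hb, ⟨x, rfl⟩ | ⟨y, hy, rfl⟩⟩
    · exact Or.inl ⟨x, hb, rfl⟩
    · exact Or.inr ⟨y, ⟨hb, hy⟩, rfl⟩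
  · rintro (⟨x, hx, rfl⟩ | ⟨y, ⟨hy, hyl⟩, rfl⟩)
    · exact ⟨hx, Or.inl ⟨x, rfl⟩⟩
    · exact ⟨hy, Or.inr ⟨y, hyl, rfl⟩⟩

theorem dval_upperCross (ν : YoungDiagram) (k x : ℕ) :
    dval ν (upperCross k x) = (ν.rowLen x : ℤ) + ν.rowLen k - x - k - 1 := by
  rw [dval, upperCross, if_pos min_le_max]
  rcases le_total x k with h | h
  · rw [min_eq_left h, max_eq_right h]
  · rw [min_eq_right h, max_eq_left h]
    ring

theorem dval_lowerCross (ν : YoungDiagram) {l y : ℕ} (hy : y ≠ l) :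
    dval ν (lowerCross l y) = -(ν.colLen y : ℤ) - ν.colLen l + y + l + 1 := by
  rw [dval, lowerCross, if_neg (by omega)]
  rcases le_total y l with h | h
  · rw [max_eq_right h, min_eq_left h]
    ring
  · rw [max_eq_left h, min_eq_right h]

section Corner

variable {lam mu : YoungDiagram} {k l : ℕ}

theorem mem_iff_of_cells_eq_erase (hmu : mu.cells = lam.cells.erase (k, l)) {b : ℕ × ℕ} :
    b ∈ mu ↔ b ∈ lam ∧ b ≠ (k, l) := by
  rw [← mem_cells, hmu, mem_erase, mem_cells, and_comm]

theorem rowLen_eq_of_ne (hmu : mu.cells = lam.cells.erase (k, l)) {i : ℕ} (hi : i ≠ k) :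
    mu.rowLen i = lam.rowLen i :=
  eq_of_forall_lt_iff fun j => by
    rw [← mem_iff_lt_rowLen, ← mem_iff_lt_rowLen, mem_iff_of_cells_eq_erase hmu]
    simp [hi]

theorem colLen_eq_of_ne (hmu : mu.cells = lam.cells.erase (k, l)) {j : ℕ} (hj : j ≠ l) :
    mu.colLen j = lam.colLen j :=
  eq_of_forall_lt_iff fun i => by
    rw [← mem_iff_lt_colLen, ← mem_iff_lt_colLen, mem_iff_of_cells_eq_erase hmu]
    simp [hj]

theorem lam_rowLen_corner (hbox : (k, l) ∈ lam) (hmu : mu.cells = lam.cells.erase (k, l)) :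
    lam.rowLen k = l + 1 := by
  have hlt := mem_iff_lt_rowLen.1 hbox
  have hnext : (k, l + 1) ∉ lam := fun h =>
    ((mem_iff_of_cells_eq_erase hmu).1 (mu.up_left_mem le_rfl l.le_succ
      ((mem_iff_of_cells_eq_erase hmu).2 ⟨h, by simp⟩))).2 rfl
  rw [mem_iff_lt_rowLen] at hnext
  omega

theorem lam_colLen_corner (hbox : (k, l) ∈ lam) (hmu : mu.cells = lam.cells.erase (k, l)) :
    lam.colLen l = k + 1 := by
  have hlt := mem_iff_lt_colLen.1 hbox
  have hnext : (k + 1, l) ∉ lam := fun h =>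
    ((mem_iff_of_cells_eq_erase hmu).1 (mu.up_left_mem k.le_succ le_rfl
      ((mem_iff_of_cells_eq_erase hmu).2 ⟨h, by simp⟩))).2 rfl
  rw [mem_iff_lt_colLen] at hnext
  omega

theorem mu_rowLen_corner (hbox : (k, l) ∈ lam) (hmu : mu.cells = lam.cells.erase (k, l)) :
    mu.rowLen k = l :=
  eq_of_forall_lt_iff fun j => by
    rw [← mem_iff_lt_rowLen, mem_iff_of_cells_eq_erase hmu, mem_iff_lt_rowLen,
      lam_rowLen_corner hbox hmu]
    simp only [ne_eq, Prod.mk.injEq, true_and]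
    omega

theorem mu_colLen_corner (hbox : (k, l) ∈ lam) (hmu : mu.cells = lam.cells.erase (k, l)) :
    mu.colLen l = k :=
  eq_of_forall_lt_iff fun i => by
    rw [← mem_iff_lt_colLen, mem_iff_of_cells_eq_erase hmu, mem_iff_lt_colLen,
      lam_colLen_corner hbox hmu]
    simp only [ne_eq, Prod.mk.injEq, and_true]
    omega

theorem dval_eq_of_not_onCross (hmu : mu.cells = lam.cells.erase (k, l)) {b : ℕ × ℕ}
    (hb : ¬OnCross k l b) : dval lam b = dval mu b := by
  simp only [OnCross, not_or, not_and_or] at hb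
  unfold dval
  split_ifs with h
  · rw [rowLen_eq_of_ne hmu (by omega), rowLen_eq_of_ne hmu (by omega)]
  · rw [colLen_eq_of_ne hmu (by omega), colLen_eq_of_ne hmu (by omega)]

theorem mu_dval_upperCross (hbox : (k, l) ∈ lam) (hmu : mu.cells = lam.cells.erase (k, l))
    (z : R) (x : ℕ) : z + k - l + dval mu (upperCross k x) = rowOuter mu z x - 1 := by
  rw [dval_upperCross, mu_rowLen_corner hbox hmu, rowOuter]
  push_cast
  ring

theorem lam_dval_upperCross (hbox : (k, l) ∈ lam) (hmu : mu.cells = lam.cells.erase (k, l))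
    (z : R) {x : ℕ} (hx : x ≠ k) : z + k - l + dval lam (upperCross k x) = rowOuter mu z x := by
  rw [dval_upperCross, lam_rowLen_corner hbox hmu, ← rowLen_eq_of_ne hmu hx, rowOuter]
  push_cast
  ring

theorem lam_dval_upperCross_self (hbox : (k, l) ∈ lam) (hmu : mu.cells = lam.cells.erase (k, l))
    (z : R) : z + k - l + dval lam (upperCross k k) = z + l - k + 1 := by
  rw [dval_upperCross, lam_rowLen_corner hbox hmu]
  push_cast
  ring

theorem mu_dval_lowerCross (hbox : (k, l) ∈ lam) (hmu : mu.cells = lam.cells.erase (k, l))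
    (z : R) {y : ℕ} (hy : y ≠ l) : z + k - l + dval mu (lowerCross l y) = colOuter mu z y + 1 := by
  rw [dval_lowerCross mu hy, mu_colLen_corner hbox hmu, colOuter]
  push_cast
  ring

theorem lam_dval_lowerCross (hbox : (k, l) ∈ lam) (hmu : mu.cells = lam.cells.erase (k, l))
    (z : R) {y : ℕ} (hy : y ≠ l) : z + k - l + dval lam (lowerCross l y) = colOuter mu z y := by
  rw [dval_lowerCross lam hy, lam_colLen_corner hbox hmu, ← colLen_eq_of_ne hmu hy, colOuter]
  push_cast
  ring

theorem onCross_boundary_of_le (hbox : (k, l) ∈ lam) (hmu : mu.cells = lam.cells.erase (k, l))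
    (hkl : k ≤ l) (z : R) :
    (z + l - k + 1) * ∏ b ∈ mu.cells.filter (OnCross k l), (z + k - l + dval mu b) =
        boundaryDen mu z l * (z + l - k + 1) ∧
      (z + l - k) * ((z + k - l + dval lam (k, l)) *
          ∏ b ∈ mu.cells.filter (OnCross k l), (z + k - l + dval lam b)) =
        boundaryNum mu z l * (z + l - k + 1) := by
  have hrow := mu_rowLen_corner hbox hmu
  have hrowl : mu.rowLen l ≤ l := hrow ▸ mu.rowLen_anti k l hkl
  have hX : ∀ x, upperCross k x ∈ mu ↔ x ∈ range l := by
    intro x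
    rw [mem_range, upperCross]
    rcases lt_or_ge x k with h | h
    · rw [min_eq_left h.le, max_eq_right h.le, mem_iff_lt_colLen]
      have := mu.colLen_anti k l hkl
      rw [mu_colLen_corner hbox hmu] at this
      omega
    · rw [min_eq_right h, max_eq_left h, mem_iff_lt_rowLen, hrow]
  have hY : ∀ y, lowerCross l y ∈ mu ∧ y ≠ l ↔ y ∈ range (mu.rowLen l) := by
    intro y
    rw [mem_range, lowerCross]
    rcases le_total y l with h | h
    · rw [max_eq_right h, min_eq_left h, mem_iff_lt_rowLen]
      omega
    · rw [max_eq_left h, min_eq_right h, mem_iff_lt_colLen, mu_colLen_corner hbox hmu]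
      omega
  have hYl : ∀ y ∈ range (mu.rowLen l), y ≠ l := fun y hy => by
    have := mem_range.1 hy
    omega
  rw [prod_filter_onCross mu hX hY, prod_filter_onCross mu hX hY,
    prod_congr rfl fun x _ => mu_dval_upperCross hbox hmu z x,
    prod_congr rfl fun y hy => mu_dval_lowerCross hbox hmu z (hYl y hy),
    prod_congr rfl fun y hy => lam_dval_lowerCross hbox hmu z (hYl y hy)]
  refine ⟨by rw [boundaryDen]; ring, ?_⟩
  have hk : k ∈ range (l + 1) := mem_range.2 (Nat.lt_succ_of_le hkl)
  have hcorner : ((k, l) : ℕ × ℕ) = upperCross k l := by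
    rw [upperCross, min_eq_right hkl, max_eq_left hkl]
  have hswap : (z + l - k) * ∏ x ∈ range (l + 1), (z + k - l + dval lam (upperCross k x)) =
      (z + l - k + 1) * ∏ x ∈ range (l + 1), rowOuter mu z x := by
    rw [← mul_prod_erase _ _ hk, ← mul_prod_erase _ (rowOuter mu z) hk,
      lam_dval_upperCross_self hbox hmu,
      prod_congr rfl fun x hx => lam_dval_upperCross hbox hmu z (ne_of_mem_erase hx),
      rowOuter, hrow]
    ring
  rw [prod_range_succ, prod_range_succ, ← hcorner] at hswap
  rw [boundaryNum]
  linear_combination (∏ y ∈ range (mu.rowLen l), colOuter mu z y) * hswap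

theorem onCross_boundary_of_lt (hbox : (k, l) ∈ lam) (hmu : mu.cells = lam.cells.erase (k, l))
    (hlk : l < k) (z : R) :
    (z + l - k + 1) * ∏ b ∈ mu.cells.filter (OnCross k l), (z + k - l + dval mu b) =
        boundaryDen mu z (mu.colLen k) *
          ∏ y ∈ Ico (mu.rowLen (mu.colLen k)) k, (colOuter mu z y + 1) ∧
      (z + l - k) * ((z + k - l + dval lam (k, l)) *
          ∏ b ∈ mu.cells.filter (OnCross k l), (z + k - l + dval lam b)) =
        boundaryNum mu z (mu.colLen k) *
          ∏ y ∈ Ico (mu.rowLen (mu.colLen k)) k, (colOuter mu z y + 1) := by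
  set n := mu.colLen k with hn_def
  have hrow := mu_rowLen_corner hbox hmu
  have hcol := mu_colLen_corner hbox hmu
  have hnk : n ≤ k := hcol ▸ mu.colLen_anti l k hlk.le
  have hrowl : l ≤ mu.rowLen l := hrow ▸ mu.rowLen_anti l k hlk.le
  have hrn : mu.rowLen n ≤ k := by
    have hout : (n, k) ∉ mu := fun h => (mem_iff_lt_colLen.1 h).false
    rw [mem_iff_lt_rowLen] at hout
    omega
  have hX : ∀ x, upperCross k x ∈ mu ↔ x ∈ range n := by
    intro x
    rw [mem_range, upperCross]
    rcases lt_or_ge x k with h | h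
    · rw [min_eq_left h.le, max_eq_right h.le, mem_iff_lt_colLen]
    · rw [min_eq_right h, max_eq_left h, mem_iff_lt_rowLen, hrow]
      omega
  have hY : ∀ y, lowerCross l y ∈ mu ∧ y ≠ l ↔ y ∈ (range k).erase l := by
    intro y
    rw [mem_erase, mem_range, lowerCross]
    rcases le_total y l with h | h
    · rw [max_eq_right h, min_eq_left h, mem_iff_lt_rowLen]
      omega
    · rw [max_eq_left h, min_eq_right h, mem_iff_lt_colLen, hcol]
      omega
  have hXk : ∀ x ∈ range n, x ≠ k := fun x hx => by
    have := mem_range.1 hx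
    omega
  rw [prod_filter_onCross mu hX hY, prod_filter_onCross mu hX hY,
    prod_congr rfl fun x _ => mu_dval_upperCross hbox hmu z x,
    prod_congr rfl fun y hy => mu_dval_lowerCross hbox hmu z (ne_of_mem_erase hy),
    prod_congr rfl fun x hx => lam_dval_upperCross hbox hmu z (hXk x hx),
    prod_congr rfl fun y hy => lam_dval_lowerCross hbox hmu z (ne_of_mem_erase hy)]
  have hcorner : ((k, l) : ℕ × ℕ) = lowerCross l k := by
    rw [lowerCross, max_eq_left hlk.le, min_eq_right hlk.le]
  have hl : l ∈ range k := mem_range.2 hlk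
  have hVl : colOuter mu z l = z + l - k := by rw [colOuter, hcol]
  have hsplit := prod_range_mul_prod_Ico (fun y => colOuter mu z y) hrn
  have hsplit' := prod_range_mul_prod_Ico (fun y => colOuter mu z y + 1) hrn
  rw [← mul_prod_erase _ _ hl, hVl] at hsplit hsplit'
  -- columns `mu.rowLen n ≤ y < k` all have length `n`
  have hrun := mul_prod_Ico_colOuter mu z hrn (m := n) fun y hy =>
    colLen_eq_of_rowLen_le mu (mem_Ico.1 hy).1 fun i hi =>
      (mem_Ico.1 hy).2.trans (mem_iff_lt_rowLen.1 (mem_iff_lt_colLen.2 hi))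
  rw [hcorner, lam_dval_lowerCross hbox hmu z hlk.ne', boundaryDen, boundaryNum]
  constructor
  · linear_combination (∏ x ∈ range n, (rowOuter mu z x - 1)) * hsplit'.symm
  · have hUn : rowOuter mu z n = z - n + mu.rowLen n := by rw [rowOuter]; ring
    have hVk : colOuter mu z k = z - n + k := by rw [colOuter]; ring
    rw [hUn, hVk]
    linear_combination (z - n + k) * (∏ x ∈ range n, rowOuter mu z x) * hsplit.symm -
      (∏ x ∈ range n, rowOuter mu z x) * (∏ y ∈ range (mu.rowLen n), colOuter mu z y) * hrun

theorem exists_boundary_corner (hbox : (k, l) ∈ lam) (hmu : mu.cells = lam.cells.erase (k, l))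
    (z : R) : ∃ n W,
      (z + l - k + 1) * ∏ b ∈ mu.cells, (z + k - l + dval mu b) = boundaryDen mu z n * W ∧
        (z + l - k) * ∏ b ∈ lam.cells, (z + k - l + dval lam b) = boundaryNum mu z n * W := by
  obtain ⟨n, W, hden, hnum⟩ : ∃ n W,
      (z + l - k + 1) * ∏ b ∈ mu.cells.filter (OnCross k l), (z + k - l + dval mu b) =
          boundaryDen mu z n * W ∧
        (z + l - k) * ((z + k - l + dval lam (k, l)) *
            ∏ b ∈ mu.cells.filter (OnCross k l), (z + k - l + dval lam b)) =
          boundaryNum mu z n * W := by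
    rcases le_or_gt k l with hkl | hlk
    · exact ⟨_, _, onCross_boundary_of_le hbox hmu hkl z⟩
    · exact ⟨_, _, onCross_boundary_of_lt hbox hmu hlk z⟩
  set off := mu.cells.filter (¬OnCross k l ·)
  have hoff : ∏ b ∈ off, (z + k - l + dval lam b : R) = ∏ b ∈ off, (z + k - l + dval mu b : R) :=
    prod_congr rfl fun b hb => by rw [dval_eq_of_not_onCross hmu (mem_filter.1 hb).2]
  have hlam : lam.cells = insert (k, l) mu.cells := by
    rw [hmu, insert_erase ((mem_cells _).2 hbox)]
  have hnotMem : (k, l) ∉ mu.cells := by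
    rw [hmu]
    exact notMem_erase _ _
  refine ⟨n, W * ∏ b ∈ off, (z + k - l + dval mu b), ?_, ?_⟩
  · rw [← prod_filter_mul_prod_filter_not mu.cells (OnCross k l)]
    linear_combination (∏ b ∈ off, (z + k - l + dval mu b : R)) * hden
  · rw [hlam, prod_insert hnotMem, ← prod_filter_mul_prod_filter_not mu.cells (OnCross k l), hoff]
    linear_combination (∏ b ∈ off, (z + k - l + dval mu b : R)) * hnum

theorem corner_content_identity [IsDomain R] (hbox : (k, l) ∈ lam)
    (hmu : mu.cells = lam.cells.erase (k, l)) {z : R} (hz : ∀ b ∈ mu.cells, z - b.1 + b.2 ≠ 0) :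
    z * (z + l - k + 1) * (∏ b ∈ mu.cells, ((z - b.1 + b.2) ^ 2 - 1)) *
        ∏ b ∈ mu.cells, (z + k - l + dval mu b) =
      (z + l - k) * (∏ b ∈ mu.cells, (z - b.1 + b.2) ^ 2) *
        ∏ b ∈ lam.cells, (z + k - l + dval lam b) := by
  obtain ⟨n, W, hden, hnum⟩ := exists_boundary_corner hbox hmu z
  refine mul_right_cancel₀ (boundaryDen_colLen_zero_ne_zero mu z hz) ?_
  linear_combination
    (z + l - k + 1) * (∏ b ∈ mu.cells, (z + k - l + dval mu b)) *
      mul_prod_cells_mul_boundaryDen mu z +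
    (∏ b ∈ mu.cells, (z - b.1 + b.2) ^ 2) * boundaryNum mu z (mu.colLen 0) * hden -
    (∏ b ∈ mu.cells, (z - b.1 + b.2) ^ 2) * boundaryDen mu z (mu.colLen 0) * hnum -
    (∏ b ∈ mu.cells, (z - b.1 + b.2) ^ 2) * W *
      boundaryNum_mul_boundaryDen_comm mu z n (mu.colLen 0)

end Corner

end HookContent

open HookContent

/-- The hook–content identity underlying the hook dimension formula for the
classical groups: `μ` is obtained from `λ` by removing the corner box `(k, l)`
(0-indexed `(k₀, l₀)`), `c★ = (t-1)/2 + l - k` and `c(i,j) = (t-1)/2 + j - i`. -/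
theorem hook_content_identity (lam mu : YoungDiagram) (k₀ l₀ : ℕ)
    (hbox : (k₀, l₀) ∈ lam) (hmu : mu.cells = lam.cells.erase (k₀, l₀)) (t : ℂ)
    (hc : (t - 1) / 2 + (l₀ : ℂ) - (k₀ : ℂ) ≠ 0)
    (hcc : ∀ b ∈ mu.cells,
      ((t - 1) / 2 + (l₀ : ℂ) - (k₀ : ℂ)) + ((t - 1) / 2 + (b.2 : ℂ) - (b.1 : ℂ)) ≠ 0)
    (hprod : ∏ b ∈ mu.cells, (t - 1 + (dval mu b : ℂ)) ≠ 0) :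
    (((t - 1) / 2 + (l₀ : ℂ) - (k₀ : ℂ)) + (t - 1) / 2) *
        (2 * ((t - 1) / 2 + (l₀ : ℂ) - (k₀ : ℂ)) + 1) /
        (2 * ((t - 1) / 2 + (l₀ : ℂ) - (k₀ : ℂ))) *
      ∏ b ∈ mu.cells,
        ((((t - 1) / 2 + (l₀ : ℂ) - (k₀ : ℂ)) + ((t - 1) / 2 + (b.2 : ℂ) - (b.1 : ℂ))) ^ 2 - 1) /
          (((t - 1) / 2 + (l₀ : ℂ) - (k₀ : ℂ)) + ((t - 1) / 2 + (b.2 : ℂ) - (b.1 : ℂ))) ^ 2 =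
    (∏ b ∈ lam.cells, (t - 1 + (dval lam b : ℂ))) /
      (∏ b ∈ mu.cells, (t - 1 + (dval mu b : ℂ))) := by
  -- `c★ + c(i, j) = z + j - i` and `t - 1 = z + k - l` for `z = t - 1 + l - k`
  have hcontent : ∀ b : ℕ × ℕ, (t - 1) / 2 + (l₀ : ℂ) - k₀ + ((t - 1) / 2 + b.2 - b.1) =
      t - 1 + (l₀ - k₀) - b.1 + b.2 := fun b => by ring
  have hshift : ∀ d : ℂ, t - 1 + (l₀ - k₀) + k₀ - l₀ + d = t - 1 + d := fun d => by ring
  simp only [hcontent] at hcc ⊢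
  have key := corner_content_identity hbox hmu hcc
  simp only [hshift] at key
  have hsq : ∏ b ∈ mu.cells, (t - 1 + (l₀ - k₀) - b.1 + b.2 : ℂ) ^ 2 ≠ 0 :=
    prod_ne_zero_iff.2 fun b hb => pow_ne_zero 2 (hcc b hb)
  rw [prod_div_distrib, div_mul_div_comm,
    div_eq_div_iff (mul_ne_zero (mul_ne_zero two_ne_zero hc) hsq) hprod]
  linear_combination key

end
end

section
/- For all integers l ≥ 0 and N ≥ 3l, Σ_{k=l}^{2l} (−1)^k · (N − k)! / ( (k − l)! · (2l − k)! · (N − k − l)! ) = (−1)^l. -/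
/-!
Substituting `N = 3l + m` and `k = 2l - i`, the `k`-th term becomes
`(-1)^l * (-1)^(l-i) * C(l, i) * C(l + m + i, l)`, so the sum is `(-1)^l` times the `l`-th forward
difference of `x ↦ C(x, l)` at `x = l + m`, and that difference is `C(x, 0) = 1`.
-/

open Finset

theorem Nat.cast_factorial_add_add_div (K : Type*) [Field K] [CharZero K] (a b c : ℕ) :
    ((a + b + c).factorial : K) / (a.factorial * b.factorial * c.factorial) =
      (a + b).choose a * (a + b + c).choose (a + b) := by
  have : ((a + b).factorial : K) ≠ 0 := Nat.cast_ne_zero.mpr (Nat.factorial_ne_zero _)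
  rw [Nat.cast_add_choose, Nat.cast_add_choose]
  field_simp

theorem sum_range_neg_one_pow_mul_choose_mul_add_choose (l y : ℕ) :
    ∑ i ∈ range (l + 1), (-1 : ℤ) ^ (l - i) * l.choose i * (y + i).choose l = 1 := by
  have h := congr_fun (fwdDiff_iter_choose 0 l) y
  rw [fwdDiff_iter_eq_sum_shift] at h
  simpa using h

/-- `Σ_{k=l}^{2l} (-1)^k (N-k)! / ((k-l)! (2l-k)! (N-k-l)!) = (-1)^l` for `N ≥ 3l`. -/
theorem alternating_sum_factorial_identity (l N : ℕ) (h : 3 * l ≤ N) :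
    ∑ k ∈ Finset.Icc l (2 * l),
      (-1 : ℚ) ^ k * (N - k).factorial /
        ((k - l).factorial * (2 * l - k).factorial * (N - k - l).factorial) =
      (-1 : ℚ) ^ l := by
  obtain ⟨m, rfl⟩ := Nat.exists_eq_add_of_le h
  calc _ = ∑ i ∈ range (l + 1),
        (-1 : ℚ) ^ l * ((-1) ^ (l - i) * l.choose i * (l + m + i).choose l) := by
        refine sum_nbij' (2 * l - ·) (2 * l - ·) ?_ ?_ ?_ ?_ fun k hk ↦ ?_
        iterate 4 (intro k hk; simp only [mem_Icc, mem_range] at *; omega)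
        obtain ⟨a, b, rfl, rfl⟩ : ∃ a b, l = a + b ∧ k = 2 * a + b := by
          simp only [mem_Icc] at hk; exact ⟨k - l, 2 * l - k, by omega, by omega⟩
        rw [mul_div_assoc, show 3 * (a + b) + m - (2 * a + b) = a + b + (b + m) by omega,
          show 2 * a + b - (a + b) = a by omega, show 2 * (a + b) - (2 * a + b) = b by omega,
          show a + b + (b + m) - (a + b) = b + m by omega, Nat.cast_factorial_add_add_div,
          show a + b - b = a by omega, show a + b + m + b = a + b + (b + m) by ring,
          Nat.choose_symm_add]
        ring
    _ = (-1 : ℚ) ^ l := by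
        rw [← mul_sum]
        convert mul_one ((-1 : ℚ) ^ l) using 2
        exact_mod_cast sum_range_neg_one_pow_mul_choose_mul_add_choose l (l + m)
end

section
/- (Evaluation of the row double Schur polynomial.) Let (a_i)_{i ∈ ℤ} be any sequence of complex numbers, and let n ≥ 1, l ≥ 0, k ≥ 0 be integers. Define y ∈ ℂ^n by y_i := a_i for 1 ≤ i ≤ n−1 and y_n := a_{n+k}. Then Σ_{1 ≤ i_1 ≤ ⋯ ≤ i_l ≤ n} ∏_{t=1}^{l} ( y_{i_t} − a_{i_t + t − 1} ) = ∏_{t=1}^{l} ( a_{n+k} − a_{n+t−1} ); that is, in the sum only the term with i_1 = ⋯ = i_l = n survives. (Since the double Schur polynomial s_{(l)}(x|a) := Σ_{1 ≤ i_1 ≤ ⋯ ≤ i_l ≤ n} ∏_{t=1}^{l} (x_{i_t} − a_{i_t+t−1}) is symmetric in x, this computes s_{(l)}(a_{(k)}|a) for a_{(k)} = (a_{k+n}, a_{n−1}, …, a_1).) -/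
open Finset

noncomputable section

/-- The point `a_{(k)} = (a_{k+n}, a_{n-1}, …, a_1)` reordered increasingly:
`y_i = a_i` for `1 ≤ i ≤ n-1` and `y_n = a_{n+k}` (0-indexed `i₀ = i - 1`). -/
def yRow (a : ℤ → ℂ) (n k : ℕ) : Fin n → ℂ :=
  fun i => if (i : ℕ) = n - 1 then a ((n : ℤ) + k) else a ((i : ℕ) + 1)

/-! The only way the first factor `y_{i_1} - a_{i_1}` can be nonzero is `i_1 = n`, and
monotonicity then forces `i_1 = ⋯ = i_l = n`. -/

theorem Monotone.eq_const_top_of_map_bot {α β : Type*} [Preorder α] [OrderBot α] [PartialOrder β]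
    [OrderTop β] {f : α → β} (hf : Monotone f) (h : f ⊥ = ⊤) : f = fun _ => ⊤ :=
  funext fun _ => top_unique (h ▸ hf bot_le)

theorem yRow_last (a : ℤ → ℂ) (n k : ℕ) : yRow a (n + 1) k (Fin.last n) = a ((n + 1 : ℕ) + k) := by
  simp [yRow]

theorem yRow_of_ne_last (a : ℤ → ℂ) (n k : ℕ) {i : Fin (n + 1)} (hi : i ≠ Fin.last n) :
    yRow a (n + 1) k i = a ((i : ℕ) + 1) := by
  rw [yRow, if_neg]
  simpa [Fin.ext_iff] using hi

open scoped Classical in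
/-- Evaluation of the row double Schur polynomial: in
`s_{(l)}(x|a) = Σ_{1 ≤ i_1 ≤ … ≤ i_l ≤ n} ∏_{t=1}^{l} (x_{i_t} - a_{i_t+t-1})`
evaluated at `x = y`, only the term with `i_1 = … = i_l = n` survives, giving
`∏_{t=1}^{l} (a_{n+k} - a_{n+t-1})`. -/
theorem row_double_schur_evaluation (a : ℤ → ℂ) (n : ℕ) (hn : 1 ≤ n) (l k : ℕ) :
    ∑ f ∈ Finset.univ.filter (fun f : Fin l → Fin n => Monotone f),
        ∏ t : Fin l, (yRow a n k (f t) - a (((f t : ℕ) : ℤ) + ((t : ℕ) : ℤ) + 1)) =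
      ∏ t : Fin l, (a ((n : ℤ) + k) - a ((n : ℤ) + (t : ℕ))) := by
  obtain ⟨n, rfl⟩ := Nat.exists_eq_add_of_le' hn
  cases l with
  | zero => simp [show ∀ f : Fin 0 → Fin (n + 1), Monotone f from fun _ i => i.elim0]
  | succ l =>
    rw [sum_eq_single_of_mem (fun _ => Fin.last n) (by simp [monotone_const])]
    · refine prod_congr rfl fun t _ => ?_
      rw [yRow_last, Fin.val_last]
      push_cast
      ring_nf
    · intro f hf hne
      have hf0 : f 0 ≠ Fin.last n := fun h =>
        hne ((mem_filter.1 hf).2.eq_const_top_of_map_bot h)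
      refine prod_eq_zero (mem_univ 0) ?_
      simp [yRow_of_ne_last a n k hf0]

end
end

section
/- (Evaluation of the column double Schur polynomial.) Let (a_i)_{i ∈ ℤ} be any sequence of complex numbers, and let n ≥ 1 and 1 ≤ l ≤ k ≤ n be integers. Define x ∈ ℂ^n by x_j := a_{n−j+2} for 1 ≤ j ≤ k and x_j := a_{n−j+1} for k < j ≤ n. Then Σ_{1 ≤ i_1 < ⋯ < i_l ≤ n} ∏_{t=1}^{l} ( x_{i_t} − a_{i_t − t + 1} ) = ∏_{t=1}^{l} ( a_{n−l+1+t} − a_{n−k+1} ); i.e. the column double Schur polynomial satisfies s_{(1^l)}(a_{(1^k)}|a) = (a_{n−l+2} − a_{n−k+1})(a_{n−l+3} − a_{n−k+1}) ⋯ (a_{n+1} − a_{n−k+1}). -/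
/-!
The sum is the factorial elementary symmetric polynomial `e_l(x | a)`. Splitting off the first
variable gives the recursion
`e_l(x₁, x₂, … | a) = (x₁ - a₁) e_{l-1}(x₂, … | a) + e_l(x₂, … | a₂, a₃, …)`,
from which `e_l` is symmetric in `x`. Listed in increasing order, the point `a_{(1^k)}` is
`a₁, …, a_{n-k}, a_{n-k+2}, …, a_{n+1}`. On the initial run `a₁, …, a_{n-k}` every `e_l` with
`l ≥ 1` vanishes, and appending the remaining entries one at a time (the recursion in the last
variable) turns the closed form into a telescoping identity of products.
-/

open Finset

noncomputable section

/-- The point `a_{(1^k)} = (a_{n+1}, a_n, …, a_{n-k+2}, a_{n-k}, …, a_1)`: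
in 1-indexed terms `x_j = a_{n-j+2}` for `1 ≤ j ≤ k` and `x_j = a_{n-j+1}` for
`k < j ≤ n` (0-indexed `j₀ = j - 1`). -/
def xCol (a : ℤ → ℂ) (n k : ℕ) : Fin n → ℂ :=
  fun j => if (j : ℕ) + 1 ≤ k then a ((n : ℤ) - (j : ℕ) + 1) else a ((n : ℤ) - (j : ℕ))

theorem prod_range_succ_sub_add_telescope {R : Type*} [CommRing R] (f : ℕ → R) (A : R) (l : ℕ) :
    ∏ t ∈ range (l + 1), (f t - A) + (f (l + 1) - f 0) * ∏ t ∈ range l, (f (t + 1) - A) =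
      ∏ t ∈ range (l + 1), (f (t + 1) - A) := by
  rw [prod_range_succ' (fun t => f t - A), prod_range_succ (fun t => f (t + 1) - A)]
  ring

section StrictMonoFin

variable {M : Type*} [AddCommMonoid M] {l m : ℕ}

open scoped Classical in
theorem sum_filter_strictMono_succ_comp (F : (Fin l → Fin (m + 1)) → M) :
    ∑ g ∈ univ.filter (fun g : Fin l → Fin m => StrictMono g), F (Fin.succ ∘ g) =
      ∑ f ∈ univ.filter (fun f : Fin l → Fin (m + 1) => StrictMono f ∧ ∀ t, 0 < f t), F f := by
  refine sum_nbij (Fin.succ ∘ ·) ?_ ?_ ?_ (fun _ _ => rfl)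
  · intro g hg
    simp only [mem_filter, mem_univ, true_and] at hg ⊢
    exact ⟨Fin.strictMono_succ.comp hg, fun t => Fin.succ_pos _⟩
  · intro g₁ _ g₂ _ h
    exact funext fun t => Fin.succ_injective _ (congrFun h t)
  · intro f hf
    simp only [mem_coe, mem_filter, mem_univ, true_and] at hf
    refine ⟨fun t => (f t).pred (hf.2 t).ne', ?_, funext fun t => Fin.succ_pred _ _⟩
    simp only [mem_coe, mem_filter, mem_univ, true_and]
    exact fun p q hpq => Fin.pred_lt_pred_iff.mpr (hf.1 hpq)

open scoped Classical in
theorem sum_filter_strictMono_cons_zero (F : (Fin (l + 1) → Fin (m + 1)) → M) :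
    ∑ g ∈ univ.filter (fun g : Fin l → Fin (m + 1) => StrictMono g ∧ ∀ t, 0 < g t),
        F (Fin.cons 0 g) =
      ∑ f ∈ univ.filter (fun f : Fin (l + 1) → Fin (m + 1) => StrictMono f ∧ f 0 = 0), F f := by
  refine sum_nbij' (fun g => (Fin.cons 0 g : Fin (l + 1) → Fin (m + 1))) Fin.tail ?_ ?_
    (fun g _ => Fin.tail_cons _ _) ?_ (fun _ _ => rfl)
  · intro g hg
    simp only [mem_filter, mem_univ, true_and] at hg ⊢
    exact ⟨Fin.strictMono_cons.mpr ⟨hg.2, hg.1⟩, Fin.cons_zero _ _⟩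
  · intro f hf
    rw [mem_filter] at hf
    have hcons := hf.2.1
    rw [← Fin.cons_self_tail f, hf.2.2, Fin.strictMono_cons] at hcons
    exact mem_filter.mpr ⟨mem_univ _, hcons.2, hcons.1⟩
  · intro f hf
    rw [← (mem_filter.mp hf).2.2, Fin.cons_self_tail]

end StrictMonoFin

section FactorialESymm

variable {R : Type*} [CommRing R] (a : ℤ → R)

/-- `factorialESymm a D xs l` is `e_l(xs | a_D, a_{D+1}, …)`. -/
def factorialESymm : ℤ → List R → ℕ → R
  | _, _, 0 => 1
  | _, [], _ + 1 => 0
  | D, x :: xs, l + 1 => (x - a D) * factorialESymm D xs l + factorialESymm (D + 1) xs (l + 1)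

@[simp] theorem factorialESymm_zero (D : ℤ) (xs : List R) : factorialESymm a D xs 0 = 1 := by
  cases xs <;> rfl

@[simp] theorem factorialESymm_nil_succ (D : ℤ) (l : ℕ) : factorialESymm a D [] (l + 1) = 0 :=
  rfl

theorem factorialESymm_cons_succ (D : ℤ) (x : R) (xs : List R) (l : ℕ) :
    factorialESymm a D (x :: xs) (l + 1) =
      (x - a D) * factorialESymm a D xs l + factorialESymm a (D + 1) xs (l + 1) :=
  rfl

theorem factorialESymm_perm {xs ys : List R} (h : xs.Perm ys) (D : ℤ) (l : ℕ) :
    factorialESymm a D xs l = factorialESymm a D ys l := by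
  induction h generalizing D l with
  | nil => rfl
  | cons x _ ih =>
    cases l with
    | zero => simp
    | succ l => rw [factorialESymm_cons_succ, factorialESymm_cons_succ, ih, ih]
  | swap x y xs =>
    match l with
    | 0 => simp
    | 1 => simp only [factorialESymm_cons_succ, factorialESymm_zero]; ring
    | l + 2 => simp only [factorialESymm_cons_succ]; ring
  | trans _ _ ih₁ ih₂ => rw [ih₁, ih₂]

theorem factorialESymm_append_singleton (xs : List R) (z : R) (D : ℤ) (l : ℕ) :
    factorialESymm a D (xs ++ [z]) (l + 1) =
      factorialESymm a D xs (l + 1) + (z - a (xs.length - l + D)) * factorialESymm a D xs l := by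
  induction xs generalizing D l with
  | nil => cases l <;> simp [factorialESymm_cons_succ]
  | cons x xs ih =>
    cases l with
    | zero =>
      simp only [List.cons_append, factorialESymm_cons_succ, factorialESymm_zero, ih,
        List.length_cons]
      push_cast
      ring_nf
    | succ l =>
      simp only [List.cons_append, factorialESymm_cons_succ, ih, List.length_cons]
      push_cast
      ring_nf

theorem factorialESymm_range_eq_zero (m : ℕ) (D : ℤ) (l : ℕ) :
    factorialESymm a D ((List.range m).map fun i : ℕ => a (i + D)) (l + 1) = 0 := by
  induction m generalizing D with
  | zero => rfl
  | succ m ih =>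
    have hshift : (fun i : ℕ => a ((i + 1 : ℕ) + D)) = fun i : ℕ => a (i + (D + 1)) := by
      funext i; push_cast; ring_nf
    rw [List.range_succ_eq_map, List.map_cons, List.map_map, Function.comp_def, hshift,
      factorialESymm_cons_succ, ih]
    simp

theorem factorialESymm_range_append_range (c j l : ℕ) :
    factorialESymm a 1 ((List.range c).map (fun i : ℕ => a (i + 1)) ++
        (List.range j).map (fun i : ℕ => a (c + 2 + i))) l =
      ∏ t ∈ range l, (a (c + j + 2 - l + t) - a (c + 1)) := by
  induction j generalizing l with
  | zero =>
    cases l with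
    | zero => simp
    | succ l =>
      rw [List.range_zero, List.map_nil, List.append_nil, factorialESymm_range_eq_zero]
      refine (prod_eq_zero (self_mem_range_succ l) ?_).symm
      push_cast
      ring_nf
  | succ j ih =>
    cases l with
    | zero => simp
    | succ l =>
      rw [List.range_succ, List.map_append, List.map_singleton, ← List.append_assoc,
        factorialESymm_append_singleton, ih, ih, List.length_append, List.length_map,
        List.length_map, List.length_range, List.length_range]
      convert prod_range_succ_sub_add_telescope (fun t : ℕ => a (c + j + 1 - l + t)) (a (c + 1)) l
        using 4 <;> push_cast <;> ring_nf

open scoped Classical in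
theorem sum_strictMono_prod_eq_factorialESymm {m : ℕ} (x : Fin m → R) (D : ℤ) (l : ℕ) :
    ∑ f ∈ univ.filter (fun f : Fin l → Fin m => StrictMono f),
        ∏ t, (x (f t) - a ((f t : ℕ) - (t : ℕ) + D)) =
      factorialESymm a D (List.ofFn x) l := by
  induction m generalizing l D with
  | zero =>
    cases l with
    | zero => simp [Subsingleton.strictMono]
    | succ l => simp
  | succ m ih =>
    cases l with
    | zero => simp [Subsingleton.strictMono]
    | succ l =>
      have hne_zero_iff : ∀ f : Fin (l + 1) → Fin (m + 1), StrictMono f →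
          (¬f 0 = 0 ↔ ∀ t, 0 < f t) := fun f hf =>
        ⟨fun h0 t => (Fin.pos_iff_ne_zero.mpr h0).trans_le (hf.monotone (Fin.zero_le t)),
          fun h => (h 0).ne'⟩
      rw [List.ofFn_succ, factorialESymm_cons_succ, ← ih, ← ih, mul_sum,
        ← sum_filter_add_sum_filter_not _ (fun f => f 0 = 0), filter_filter, filter_filter,
        filter_congr (fun f _ => and_congr_right (hne_zero_iff f)),
        ← sum_filter_strictMono_cons_zero, ← sum_filter_strictMono_succ_comp,
        ← sum_filter_strictMono_succ_comp]
      congr 1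
      · refine sum_congr rfl fun g _ => ?_
        simp [Fin.prod_univ_succ]
      · refine sum_congr rfl fun g _ => prod_congr rfl fun t _ => ?_
        simp only [Function.comp_apply, Fin.val_succ, Nat.cast_succ]
        ring_nf

end FactorialESymm

theorem reverse_ofFn_xCol (a : ℤ → ℂ) {n k : ℕ} (hkn : k ≤ n) :
    (List.ofFn (xCol a n k)).reverse =
      (List.range (n - k)).map (fun i : ℕ => a (i + 1)) ++
        (List.range k).map (fun i : ℕ => a ((n - k : ℕ) + 2 + i)) := by
  have hlen : n = n - k + k := by omega
  refine List.ext_getElem (by simpa using hlen) fun i hi _ => ?_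
  simp only [List.length_reverse, List.length_ofFn] at hi
  simp only [List.getElem_reverse, List.length_ofFn, List.getElem_ofFn, xCol, List.getElem_append,
    List.length_map, List.length_range, List.getElem_map, List.getElem_range]
  split_ifs <;> first | omega | (congr 1; omega)

open scoped Classical in
theorem col_double_schur_evaluation_general (a : ℤ → ℂ) (n l k : ℕ)
    (hkn : k ≤ n) :
    ∑ f ∈ Finset.univ.filter (fun f : Fin l → Fin n => StrictMono f),
        ∏ t : Fin l, (xCol a n k (f t) - a (((f t : ℕ) : ℤ) - ((t : ℕ) : ℤ) + 1)) =
      ∏ t : Fin l, (a ((n : ℤ) - l + 2 + (t : ℕ)) - a ((n : ℤ) - k + 1)) := by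
  rw [sum_strictMono_prod_eq_factorialESymm, factorialESymm_perm a (List.reverse_perm _).symm,
    reverse_ofFn_xCol a hkn, factorialESymm_range_append_range, ← Fin.prod_univ_eq_prod_range]
  refine prod_congr rfl fun t _ => ?_
  push_cast [hkn]
  ring_nf

open scoped Classical in
/-- Evaluation of the column double Schur polynomial:
`s_{(1^l)}(a_{(1^k)}|a) = Σ_{1 ≤ i_1 < … < i_l ≤ n} ∏_{t=1}^{l} (x_{i_t} - a_{i_t-t+1})
  = (a_{n-l+2} - a_{n-k+1})(a_{n-l+3} - a_{n-k+1}) ⋯ (a_{n+1} - a_{n-k+1})`. -/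
theorem col_double_schur_evaluation (a : ℤ → ℂ) (n l k : ℕ)
    (hl : 1 ≤ l) (hlk : l ≤ k) (hkn : k ≤ n) :
    ∑ f ∈ Finset.univ.filter (fun f : Fin l → Fin n => StrictMono f),
        ∏ t : Fin l, (xCol a n k (f t) - a (((f t : ℕ) : ℤ) - ((t : ℕ) : ℤ) + 1)) =
      ∏ t : Fin l, (a ((n : ℤ) - l + 2 + (t : ℕ)) - a ((n : ℤ) - k + 1)) :=
  col_double_schur_evaluation_general a n l k hkn

end
end

section
/- (Commutation of the contraction operators with the classical groups.) Let Z ∈ M_N(ℂ). (i) If Z^T G Z = G for the symmetric form G with entries G_{ij} = δ_{i, N+1−j}, then for all m ≥ 2 and 1 ≤ a < b ≤ m the operator Z_1 Z_2 ⋯ Z_m = Z^{⊗m} on (ℂ^N)^{⊗m} commutes with the orthogonal contraction operator Q_{ab}. (ii) If N = 2n and Z^T G Z = G for the skew-symmetric form with entries G_{ij} = ε_i δ_{i, N+1−j}, then Z^{⊗m} commutes with the symplectic contraction operator Q_{ab}. -/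
open Finset

noncomputable section

/-- `ε_i = 1` for `1 ≤ i ≤ n`, `ε_i = -1` for `n+1 ≤ i ≤ 2n` (0-indexed). -/
def epsSign (n : ℕ) (i : Fin (2 * n)) : ℂ := if (i : ℕ) < n then 1 else -1

/-- The symplectic contraction operator
`Q_{ab} = Σ_{i,j} ε_i ε_j (e_{ij})_a (e_{i'j'})_b`, where `i' = N+1-i`. -/
def Qsp {n m : ℕ} (a b : Fin m) :
    Matrix (Fin m → Fin (2 * n)) (Fin m → Fin (2 * n)) ℂ :=
  Matrix.of fun I J =>
    epsSign n (I a) * epsSign n (J a) *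
      (if I b = (I a).rev ∧ J b = (J a).rev then (1 : ℂ) else 0) *
      ∏ c ∈ Finset.univ \ {a, b}, (if I c = J c then (1 : ℂ) else 0)

/-- The symmetric bilinear form `G_{ij} = δ_{i, N+1-j}`. -/
def Gorth (N : ℕ) : Matrix (Fin N) (Fin N) ℂ :=
  Matrix.of fun i j => if j = i.rev then 1 else 0

/-- The skew-symmetric bilinear form `G_{ij} = ε_i δ_{i, N+1-j}`, `N = 2n`. -/
def Gsp (n : ℕ) : Matrix (Fin (2 * n)) (Fin (2 * n)) ℂ :=
  Matrix.of fun i j => if j = i.rev then epsSign n i else 0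

/-!
Read `G` as a vector `|G⟩` of `ℂ^N ⊗ ℂ^N`; then `Q_{ab}` is `|G⟩⟨G|` on the factors
`a, b` and the identity elsewhere. Since `(Z ⊗ Z)|G⟩ = |Z G Zᵀ⟩` and
`⟨G|(Z ⊗ Z) = ⟨Zᵀ G Z|`, both `Z^{⊗m} Q_{ab}` and `Q_{ab} Z^{⊗m}` equal
`|G⟩⟨G| ⊗ Z^{⊗(m-2)}` as soon as `Zᵀ G Z = G` and `Z G Zᵀ = G`; the second identity
follows from the first because `G²` is a nonzero scalar.
-/

open Function Matrix

section Decomposition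

variable {ι κ : Type*} [Fintype ι] [DecidableEq ι] {a b : ι}

theorem prod_update_update {M : Type*} [CommMonoid M] (hab : a ≠ b) (J : ι → κ) (k l : κ)
    (g : ι → κ → M) :
    ∏ c, g c (update (update J a k) b l c) =
      g a k * g b l * ∏ c ∈ univ \ {a, b}, g c (J c) := by
  rw [← prod_sdiff (subset_univ {a, b}), prod_pair hab, mul_comm]
  simp only [update_self, update_of_ne hab]
  congr 1
  refine prod_congr rfl fun c hc => ?_
  simp only [mem_sdiff, mem_insert, mem_singleton, not_or] at hc
  rw [update_of_ne hc.2.2, update_of_ne hc.2.1]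

theorem sum_mul_prod_sdiff_pair_ite_eq [Fintype κ] [DecidableEq κ] {R : Type*} [CommSemiring R]
    (hab : a ≠ b) (J : ι → κ) (f : (ι → κ) → R) :
    ∑ K, f K * ∏ c ∈ univ \ {a, b}, (if K c = J c then (1 : R) else 0) =
      ∑ k, ∑ l, f (update (update J a k) b l) := by
  rw [← Fintype.sum_prod_type']
  refine (Fintype.sum_of_injective (fun p : κ × κ => update (update J a p.1) b p.2) ?_ _ _
    (fun K hK => ?_) fun p => ?_).symm
  · intro p q hpq
    have ha := congrFun hpq a
    have hb := congrFun hpq b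
    simp only [update_self, update_of_ne hab] at ha hb
    exact Prod.ext ha hb
  · obtain ⟨c, hc, hKc⟩ : ∃ c ∈ univ \ {a, b}, K c ≠ J c := by
      by_contra! hK'
      refine hK ⟨(K a, K b), funext fun c => ?_⟩
      by_cases hcb : c = b
      · subst hcb; simp
      by_cases hca : c = a
      · subst hca; simp [hcb]
      simp [update_of_ne hca, update_of_ne hcb, hK' c (by simp [hca, hcb])]
    rw [prod_eq_zero hc (if_neg hKc), mul_zero]
  · rw [prod_eq_one fun c hc => ?_, mul_one]
    simp only [mem_sdiff, mem_insert, mem_singleton, not_or] at hc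
    rw [update_of_ne hc.2.2, update_of_ne hc.2.1, if_pos rfl]

end Decomposition

theorem mul_mul_transpose_eq_of_transpose_mul_mul_eq {n K : Type*} [Fintype n] [DecidableEq n]
    [Field K] {G Z : Matrix n n K} {s : K} (hs : s ≠ 0) (hG : G * G = s • 1)
    (h : Zᵀ * G * Z = G) : Z * G * Zᵀ = G := by
  have hGu : IsUnit G := IsUnit.of_mul_eq_one (s⁻¹ • G) <| by
    rw [mul_smul_comm, hG, smul_smul, inv_mul_cancel₀ hs, one_smul]
  have hinv : Zᵀ * (s⁻¹ • (G * Z * G)) = 1 := by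
    rw [mul_smul_comm, ← mul_assoc, ← mul_assoc, h, hG, smul_smul, inv_mul_cancel₀ hs,
      one_smul]
  refine hGu.mul_left_cancel ?_
  calc G * (Z * G * Zᵀ) = s • ((s⁻¹ • (G * Z * G)) * Zᵀ) := by
        rw [smul_mul_assoc, smul_smul, mul_inv_cancel₀ hs, one_smul]; simp only [mul_assoc]
    _ = G * G := by rw [mul_eq_one_comm.mp hinv, hG]

theorem Gorth_mul_self (N : ℕ) : Gorth N * Gorth N = 1 := by
  ext i j
  simp only [Gorth, mul_apply, of_apply, one_apply, ite_mul, one_mul, zero_mul, sum_ite_eq',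
    mem_univ, if_true, Fin.rev_rev, eq_comm]

theorem epsSign_mul_epsSign_rev (n : ℕ) (i : Fin (2 * n)) :
    epsSign n i * epsSign n i.rev = -1 := by
  have := Fin.val_rev i
  unfold epsSign
  split_ifs <;> first | omega | norm_num

theorem Gsp_mul_self (n : ℕ) : Gsp n * Gsp n = (-1 : ℂ) • 1 := by
  ext i j
  simp only [Gsp, mul_apply, of_apply, Matrix.smul_apply, one_apply, ite_mul, zero_mul,
    sum_ite_eq', mem_univ, if_true, Fin.rev_rev, smul_eq_mul]
  rcases eq_or_ne j i with rfl | hji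
  · simp [epsSign_mul_epsSign_rev]
  · simp [hji, hji.symm]

section PairOperator

variable {N m : ℕ}

/-- `pairOp G H Y a b` is `|G⟩⟨H|` on the factors `a, b` (with `G, H` read as vectors of
`ℂ^N ⊗ ℂ^N`) tensored with `Y` on every other factor. -/
def pairOp (G H Y : Matrix (Fin N) (Fin N) ℂ) (a b : Fin m) :
    Matrix (Fin m → Fin N) (Fin m → Fin N) ℂ :=
  of fun I J => G (I a) (I b) * H (J a) (J b) * ∏ c ∈ univ \ {a, b}, Y (I c) (J c)

theorem pairOp_transpose (G H Y : Matrix (Fin N) (Fin N) ℂ) (a b : Fin m) :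
    (pairOp G H Y a b)ᵀ = pairOp H G Yᵀ a b := by
  ext I J
  simp only [pairOp, transpose_apply, of_apply]
  ring

theorem embAll_transpose (X : Fin m → Matrix (Fin N) (Fin N) ℂ) :
    (embAll X)ᵀ = embAll fun c => (X c)ᵀ :=
  rfl

theorem embAll_const_mul_pairOp_one {a b : Fin m} (hab : a ≠ b)
    (Z G H : Matrix (Fin N) (Fin N) ℂ) :
    embAll (fun _ => Z) * pairOp G H 1 a b = pairOp (Z * G * Zᵀ) H Z a b := by
  ext I J
  simp only [embAll, pairOp, mul_apply, of_apply, one_apply, transpose_apply]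
  simp_rw [← mul_assoc]
  rw [sum_mul_prod_sdiff_pair_ite_eq hab]
  simp only [prod_update_update hab, update_of_ne hab, update_self, sum_mul]
  rw [sum_comm]
  exact sum_congr rfl fun l _ => sum_congr rfl fun k _ => by ring

theorem pairOp_one_mul_embAll_const {a b : Fin m} (hab : a ≠ b)
    (Z G H : Matrix (Fin N) (Fin N) ℂ) :
    pairOp G H 1 a b * embAll (fun _ => Z) = pairOp G (Zᵀ * H * Z) Z a b := by
  rw [← transpose_transpose (pairOp G H 1 a b * _), transpose_mul, embAll_transpose,
    pairOp_transpose, transpose_one, embAll_const_mul_pairOp_one hab, pairOp_transpose,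
    transpose_transpose]

theorem embAll_const_commute_pairOp {a b : Fin m} (hab : a ≠ b) {Z G : Matrix (Fin N) (Fin N) ℂ}
    (hZG : Z * G * Zᵀ = G) (hGZ : Zᵀ * G * Z = G) :
    embAll (fun _ => Z) * pairOp G G 1 a b = pairOp G G 1 a b * embAll (fun _ => Z) := by
  rw [embAll_const_mul_pairOp_one hab, pairOp_one_mul_embAll_const hab, hZG, hGZ]

theorem Qo_eq_pairOp (a b : Fin m) : (Qo a b : Matrix (Fin m → Fin N) _ ℂ) =
    pairOp (Gorth N) (Gorth N) 1 a b := by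
  ext I J
  simp only [Qo, pairOp, Gorth, of_apply, one_apply, ite_and, ite_mul, one_mul, zero_mul]

theorem Qsp_eq_pairOp {n : ℕ} (a b : Fin m) : (Qsp a b : Matrix (Fin m → Fin (2 * n)) _ ℂ) =
    pairOp (Gsp n) (Gsp n) 1 a b := by
  ext I J
  simp only [Qsp, pairOp, Gsp, of_apply, one_apply, ite_and, ite_mul, mul_ite, mul_zero, zero_mul]
  split_ifs <;> ring

end PairOperator

/-- If `Z` preserves the symmetric (resp. skew-symmetric) form, then
`Z^{⊗m} = Z_1 Z_2 ⋯ Z_m` commutes with the orthogonal (resp. symplectic)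
contraction operator `Q_{ab}`. -/
theorem tensor_power_commutes_with_contraction :
    (∀ (N m : ℕ) (Z : Matrix (Fin N) (Fin N) ℂ),
      Z.transpose * Gorth N * Z = Gorth N → 2 ≤ m → ∀ a b : Fin m, a < b →
        embAll (fun _ : Fin m => Z) * Qo a b = Qo a b * embAll (fun _ : Fin m => Z)) ∧
    (∀ (n m : ℕ) (Z : Matrix (Fin (2 * n)) (Fin (2 * n)) ℂ),
      Z.transpose * Gsp n * Z = Gsp n → 2 ≤ m → ∀ a b : Fin m, a < b →
        embAll (fun _ : Fin m => Z) * Qsp a b = Qsp a b * embAll (fun _ : Fin m => Z)) := by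
  constructor
  · intro N m Z hZ _ a b hab
    have hGG : Gorth N * Gorth N = (1 : ℂ) • 1 := by rw [one_smul, Gorth_mul_self]
    rw [Qo_eq_pairOp]
    exact embAll_const_commute_pairOp hab.ne
      (mul_mul_transpose_eq_of_transpose_mul_mul_eq one_ne_zero hGG hZ) hZ
  · intro n m Z hZ _ a b hab
    rw [Qsp_eq_pairOp]
    exact embAll_const_commute_pairOp hab.ne
      (mul_mul_transpose_eq_of_transpose_mul_mul_eq (by norm_num) (Gsp_mul_self n) hZ) hZ

end
end
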